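/- arXiv:2502.07863 — 5 statements merged into one kernel-verified Lean document; each statement's English description precedes it below -/
import Mathlib

section
/- Let t0 < t1 be real numbers, let f : ℝ → ℝ be continuous and strictly positive on [t0,t1], let F(t) := ∫_{t0}^{t} f(s) ds, and assume F(t1) = 1. Let v1, v2 : ℝ → ℝ be continuously differentiable on [t0,t1], and define φk(t) := vk(t) − ((1 − F(t))/f(t))·vk'(t) for k = 1,2 and t ∈ [t0,t1]. If t ↦ φ1(t) − φ2(t) is monotone (nondecreasing or nonincreasing) on [t0,t1], φ1(t0) < φ2(t0), and φ1(t1) > φ2(t1), then t ↦ v1(t) − v2(t) is nondecreasing on [t0,t1]. -/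
open Set MeasureTheory intervalIntegral Topology Filter

/-- **Lemma 1.** Let `f` be a continuous, strictly positive density on `[t0, t1]` with cdf
`F t = ∫_{t0}^t f`, `F t1 = 1`. Let `v1, v2` be continuously differentiable on `[t0, t1]`
with derivatives `v1', v2'`, and let `φk t = vk t − ((1 − F t)/f t)·vk' t` be the virtual
values. If `φ1 − φ2` is monotone on `[t0, t1]`, `φ1 t0 < φ2 t0` and `φ1 t1 > φ2 t1`, then
`v1 − v2` is nondecreasing on `[t0, t1]`. -/
theorem stmt0
    (t0 t1 : ℝ) (ht : t0 < t1)
    (f F v1 v2 v1' v2' φ1 φ2 : ℝ → ℝ)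
    (hf_cont : ContinuousOn f (Set.Icc t0 t1))
    (hf_pos : ∀ t ∈ Set.Icc t0 t1, 0 < f t)
    (hF : ∀ t, F t = ∫ s in t0..t, f s)
    (hF1 : F t1 = 1)
    (hv1 : ∀ t ∈ Set.Icc t0 t1, HasDerivWithinAt v1 (v1' t) (Set.Icc t0 t1) t)
    (hv2 : ∀ t ∈ Set.Icc t0 t1, HasDerivWithinAt v2 (v2' t) (Set.Icc t0 t1) t)
    (hv1c : ContinuousOn v1' (Set.Icc t0 t1))
    (hv2c : ContinuousOn v2' (Set.Icc t0 t1))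
    (hφ1 : ∀ t ∈ Set.Icc t0 t1, φ1 t = v1 t - ((1 - F t) / f t) * v1' t)
    (hφ2 : ∀ t ∈ Set.Icc t0 t1, φ2 t = v2 t - ((1 - F t) / f t) * v2' t)
    (hmono : MonotoneOn (fun t => φ1 t - φ2 t) (Set.Icc t0 t1) ∨
             AntitoneOn (fun t => φ1 t - φ2 t) (Set.Icc t0 t1))
    (h0 : φ1 t0 < φ2 t0)
    (h1 : φ2 t1 < φ1 t1) :
    MonotoneOn (fun t => v1 t - v2 t) (Set.Icc t0 t1) := by
  have ht0I : t0 ∈ Set.Icc t0 t1 := Set.left_mem_Icc.2 ht.le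
  have ht1I : t1 ∈ Set.Icc t0 t1 := Set.right_mem_Icc.2 ht.le
  have hfi : ∀ a ∈ Set.Icc t0 t1, ∀ b ∈ Set.Icc t0 t1,
      IntervalIntegrable f volume a b := by
    intro a ha b hb
    exact (hf_cont.mono (Set.uIcc_subset_Icc ha hb)).intervalIntegrable
  -- continuity of F
  have hFeq : F = fun t => ∫ s in t0..t, f s := funext hF
  have hFcont : ContinuousOn F (Set.Icc t0 t1) := by
    rw [hFeq, ← Set.uIcc_of_le ht.le]
    exact intervalIntegral.continuousOn_primitive_interval
      (by rw [Set.uIcc_of_le ht.le]; exact hf_cont.integrableOn_Icc)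
  -- derivative of F at interior points
  have hFd : ∀ x ∈ Set.Ioo t0 t1, HasDerivAt F (f x) x := by
    intro x hx
    have hxI : x ∈ Set.Icc t0 t1 := Set.Ioo_subset_Icc_self hx
    have hca : ContinuousAt f x := hf_cont.continuousAt (Icc_mem_nhds hx.1 hx.2)
    have hmeas : StronglyMeasurableAtFilter f (𝓝 x) volume :=
      ⟨Set.Ioo t0 t1, Ioo_mem_nhds hx.1 hx.2,
        (hf_cont.mono Set.Ioo_subset_Icc_self).aestronglyMeasurable measurableSet_Ioo⟩
    rw [hFeq]
    exact intervalIntegral.integral_hasDerivAt_right (hfi t0 ht0I x hxI) hmeas hca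
  set g : ℝ → ℝ := fun t => v1 t - v2 t with hgdef
  set g' : ℝ → ℝ := fun t => v1' t - v2' t with hg'def
  set ψ : ℝ → ℝ := fun t => φ1 t - φ2 t with hψdef
  have hψ : ∀ t ∈ Set.Icc t0 t1, ψ t = g t - ((1 - F t) / f t) * g' t := by
    intro t htI
    simp only [hψdef, hgdef, hg'def]
    rw [hφ1 t htI, hφ2 t htI]; ring
  -- ψ is monotone
  have hψmono : MonotoneOn ψ (Set.Icc t0 t1) := by
    rcases hmono with h | h
    · exact h
    · exfalso
      have h2 : φ1 t1 - φ2 t1 ≤ φ1 t0 - φ2 t0 := h ht0I ht1I ht.le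
      linarith
  -- continuity facts
  have hv1cont : ContinuousOn v1 (Set.Icc t0 t1) :=
    fun t htI => (hv1 t htI).continuousWithinAt
  have hv2cont : ContinuousOn v2 (Set.Icc t0 t1) :=
    fun t htI => (hv2 t htI).continuousWithinAt
  have hgcont : ContinuousOn g (Set.Icc t0 t1) := hv1cont.sub hv2cont
  have hg'cont : ContinuousOn g' (Set.Icc t0 t1) := hv1c.sub hv2c
  have hfne : ∀ t ∈ Set.Icc t0 t1, f t ≠ 0 := fun t htI => (hf_pos t htI).ne'
  have hψcont : ContinuousOn ψ (Set.Icc t0 t1) := by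
    have hc : ContinuousOn (fun t => g t - ((1 - F t) / f t) * g' t) (Set.Icc t0 t1) :=
      hgcont.sub (((continuousOn_const.sub hFcont).div hf_cont hfne).mul hg'cont)
    exact hc.congr hψ
  have hfψ : ∀ a ∈ Set.Icc t0 t1, IntervalIntegrable (fun s => f s * ψ s) volume a t1 :=
    fun a ha => ((hf_cont.mul hψcont).mono (Set.uIcc_subset_Icc ha ht1I)).intervalIntegrable
  -- key identity
  have hkey : ∀ a ∈ Set.Icc t0 t1, (1 - F a) * g a = ∫ s in a..t1, f s * ψ s := by
    intro a ha
    have hG : ContinuousOn (fun t => (1 - F t) * g t) (Set.Icc a t1) :=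
      ((continuousOn_const.sub hFcont).mul hgcont).mono (Set.Icc_subset_Icc ha.1 le_rfl)
    have hder : ∀ x ∈ Set.Ioo a t1,
        HasDerivWithinAt (fun t => (1 - F t) * g t) (-(f x * ψ x)) (Set.Ioi x) x := by
      intro x hx
      have hxo : x ∈ Set.Ioo t0 t1 := ⟨lt_of_le_of_lt ha.1 hx.1, hx.2⟩
      have hxI : x ∈ Set.Icc t0 t1 := Set.Ioo_subset_Icc_self hxo
      have h1 : HasDerivAt (fun t => 1 - F t) (-(f x)) x := (hFd x hxo).const_sub 1
      have h2 : HasDerivAt g (g' x) x :=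
        ((hv1 x hxI).sub (hv2 x hxI)).hasDerivAt (Icc_mem_nhds hxo.1 hxo.2)
      have h3 := h1.mul h2
      have hfx : f x ≠ 0 := hfne x hxI
      have heq : -(f x) * g x + (1 - F x) * g' x = -(f x * ψ x) := by
        rw [hψ x hxI]; field_simp; ring
      rw [heq] at h3
      exact h3.hasDerivWithinAt
    have hint : IntervalIntegrable (fun s => -(f s * ψ s)) volume a t1 := (hfψ a ha).neg
    have hftc := intervalIntegral.integral_eq_sub_of_hasDeriv_right_of_le ha.2 hG hder hint
    rw [intervalIntegral.integral_neg] at hftc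
    have ht1z : (1 - F t1) * g t1 = 0 := by rw [hF1]; ring
    rw [ht1z] at hftc
    linarith
  -- 1 - F a as a tail integral
  have hFtail : ∀ a ∈ Set.Icc t0 t1, 1 - F a = ∫ s in a..t1, f s := by
    intro a ha
    rw [← hF1, hF t1, hF a]
    exact intervalIntegral.integral_interval_sub_left (hfi t0 ht0I t1 ht1I) (hfi t0 ht0I a ha)
  have htailpos : ∀ a ∈ Set.Ico t0 t1, 0 < 1 - F a := by
    intro a ha
    have haI : a ∈ Set.Icc t0 t1 := Set.Ico_subset_Icc_self ha
    rw [hFtail a haI]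
    exact intervalIntegral.intervalIntegral_pos_of_pos_on (hfi a haI t1 ht1I)
      (fun x hx => hf_pos x ⟨le_trans haI.1 hx.1.le, hx.2.le⟩) ha.2
  -- ψ ≤ g on [t0, t1)
  have hψle : ∀ a ∈ Set.Ico t0 t1, ψ a ≤ g a := by
    intro a ha
    have haI : a ∈ Set.Icc t0 t1 := Set.Ico_subset_Icc_self ha
    have hpos := htailpos a ha
    have hcmp : ψ a * (1 - F a) ≤ (1 - F a) * g a := by
      rw [hkey a haI, hFtail a haI, ← intervalIntegral.integral_const_mul]
      apply intervalIntegral.integral_mono_on ha.2.le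
        ((hfi a haI t1 ht1I).const_mul _) (hfψ a haI)
      intro x hx
      have hxI : x ∈ Set.Icc t0 t1 := ⟨le_trans haI.1 hx.1, hx.2⟩
      have hmx : ψ a ≤ ψ x := hψmono haI hxI hx.1
      have hfx : (0:ℝ) ≤ f x := (hf_pos x hxI).le
      calc ψ a * f x = f x * ψ a := mul_comm _ _
        _ ≤ f x * ψ x := mul_le_mul_of_nonneg_left hmx hfx
    nlinarith
  -- g' ≥ 0 on the interior
  have hg'nonneg : ∀ x ∈ Set.Ioo t0 t1, 0 ≤ g' x := by
    intro x hx
    have hxI : x ∈ Set.Icc t0 t1 := Set.Ioo_subset_Icc_self hx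
    have h := hψ x hxI
    have hle := hψle x ⟨hx.1.le, hx.2⟩
    have hpos : 0 < (1 - F x) / f x :=
      div_pos (htailpos x ⟨hx.1.le, hx.2⟩) (hf_pos x hxI)
    by_contra hneg
    push_neg at hneg
    have h5 := mul_neg_of_pos_of_neg hpos hneg
    rw [h] at hle
    linarith
  -- conclude
  apply monotoneOn_of_deriv_nonneg (convex_Icc t0 t1) hgcont
  · intro x hx
    rw [interior_Icc] at hx
    exact (((hv1 x (Set.Ioo_subset_Icc_self hx)).sub
      (hv2 x (Set.Ioo_subset_Icc_self hx))).hasDerivAt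
      (Icc_mem_nhds hx.1 hx.2)).differentiableAt.differentiableWithinAt
  · intro x hx
    rw [interior_Icc] at hx
    have hd : HasDerivAt g (g' x) x :=
      ((hv1 x (Set.Ioo_subset_Icc_self hx)).sub
        (hv2 x (Set.Ioo_subset_Icc_self hx))).hasDerivAt (Icc_mem_nhds hx.1 hx.2)
    rw [hd.deriv]
    exact hg'nonneg x hx
end

section
/- Under Assumption MD, a menu M ⊆ B is a minimal MP-optimal menu if and only if M is a minimal UE-optimal menu; that is, the collection of minimal optimal menus of the monopolist's virtual-surplus problem coincides with the collection of minimal optimal menus of the unconstrained upper-envelope problem. -/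
namespace Stmt1

abbrev Bundle (n : ℕ) := Finset (Fin n)

variable {n : ℕ}

/-- A stochastic bundle: nonnegative weights on bundles summing to one. -/
def IsStoch (a : Bundle n → ℝ) : Prop :=
  (∀ b, 0 ≤ a b) ∧ ∑ b, a b = 1

/-- The point mass at a bundle, viewed as a stochastic bundle. -/
def pt (b : Bundle n) : Bundle n → ℝ := fun b' => if b' = b then 1 else 0

/-- Value of a stochastic bundle: linear extension of `v`. -/
def vA (v : Bundle n → ℝ → ℝ) (a : Bundle n → ℝ) (t : ℝ) : ℝ :=
  ∑ b, a b * v b t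

/-- A direct mechanism: a (stochastic) allocation and a payment for each type. -/
structure Mech (n : ℕ) where
  alloc : ℝ → Bundle n → ℝ
  price : ℝ → ℝ

/-- A valid mechanism: the allocation at every type is a stochastic bundle, and the
mechanism is measurable. -/
def IsValidMech (t0 t1 : ℝ) (m : Mech n) : Prop :=
  (∀ t ∈ Set.Icc t0 t1, IsStoch (m.alloc t)) ∧
  (∀ b : Bundle n, Measurable fun t => m.alloc t b) ∧
  Measurable m.price

/-- Incentive compatibility. -/
def IC (v : Bundle n → ℝ → ℝ) (t0 t1 : ℝ) (m : Mech n) : Prop :=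
  ∀ t ∈ Set.Icc t0 t1, ∀ t' ∈ Set.Icc t0 t1,
    vA v (m.alloc t') t - m.price t' ≤ vA v (m.alloc t) t - m.price t

/-- Individual rationality. -/
def IR (v : Bundle n → ℝ → ℝ) (t0 t1 : ℝ) (m : Mech n) : Prop :=
  ∀ t ∈ Set.Icc t0 t1, 0 ≤ vA v (m.alloc t) t - m.price t

/-- Virtual-surplus value of a mechanism. -/
noncomputable def Vval (v φ : Bundle n → ℝ → ℝ) (f : ℝ → ℝ) (t0 t1 : ℝ) (m : Mech n) : ℝ :=
  (∫ t in t0..t1, (∑ b, m.alloc t b * φ b t) * f t) -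
    (vA v (m.alloc t0) t0 - m.price t0)

/-- An optimal mechanism: IC and IR, with the largest virtual-surplus value among all
IC and IR mechanisms. -/
def OptimalMech (v φ : Bundle n → ℝ → ℝ) (f : ℝ → ℝ) (t0 t1 : ℝ) (m : Mech n) : Prop :=
  IsValidMech t0 t1 m ∧ IC v t0 t1 m ∧ IR v t0 t1 m ∧
  ∀ m' : Mech n, IsValidMech t0 t1 m' → IC v t0 t1 m' → IR v t0 t1 m' →
    Vval v φ f t0 t1 m' ≤ Vval v φ f t0 t1 m

/-- A menu is MP-optimal if some optimal mechanism allocates, at every type, a point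
mass at some element of the menu. -/
def MPOptimal (v φ : Bundle n → ℝ → ℝ) (f : ℝ → ℝ) (t0 t1 : ℝ) (M : Finset (Bundle n)) :
    Prop :=
  ∃ m : Mech n, OptimalMech v φ f t0 t1 m ∧
    ∀ t ∈ Set.Icc t0 t1, ∃ b ∈ M, m.alloc t = pt b

/-- A minimal MP-optimal menu. -/
def MinimalMPOptimal (v φ : Bundle n → ℝ → ℝ) (f : ℝ → ℝ) (t0 t1 : ℝ)
    (M : Finset (Bundle n)) : Prop :=
  MPOptimal v φ f t0 t1 M ∧
    ∀ M' : Finset (Bundle n), M' ⊂ M → ¬ MPOptimal v φ f t0 t1 M'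

/-- A menu is UE-optimal if at every type some element attains the upper envelope
of the virtual value functions. -/
def UEOptimal (φ : Bundle n → ℝ → ℝ) (t0 t1 : ℝ) (M : Finset (Bundle n)) : Prop :=
  ∀ t ∈ Set.Icc t0 t1, ∃ b ∈ M, ∀ b' : Bundle n, φ b' t ≤ φ b t

/-- A minimal UE-optimal menu. -/
def MinimalUEOptimal (φ : Bundle n → ℝ → ℝ) (t0 t1 : ℝ) (M : Finset (Bundle n)) : Prop :=
  UEOptimal φ t0 t1 M ∧ ∀ M' : Finset (Bundle n), M' ⊂ M → ¬ UEOptimal φ t0 t1 M'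

/-!
The virtual surplus of an IR mechanism is at most `∫ G f`, where `G` is the upper envelope of
the virtual values. Under MD the set of types at which a bundle attains `G` is an interval, and
from `∅` one can walk through a UE-optimal menu along bundles whose argmax intervals overlap and
whose virtual-value differences are nondecreasing. Value differences then are nondecreasing too,
so the step allocation along this chain, priced so that the types at the breakpoints are
indifferent, is IC and IR and attains `∫ G f`. Conversely, an optimal mechanism selling only
bundles of `M` attains `∫ G f`, which by continuity forces `max_{b ∈ M} φ b = G`. So MP- and
UE-optimality agree menu by menu, hence so do their minimal menus.
-/

open MeasureTheory Set Topology

lemma vA_pt (v : Bundle n → ℝ → ℝ) (b : Bundle n) (t : ℝ) : vA v (pt b) t = v b t := by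
  simp [vA, pt]

lemma sum_pt_mul (g : Bundle n → ℝ) (b : Bundle n) : ∑ b', pt b b' * g b' = g b := by
  simp [pt]

lemma isStoch_pt (b : Bundle n) : IsStoch (pt b) :=
  ⟨fun b' => by unfold pt; split_ifs <;> norm_num, by simp [pt]⟩

lemma IsStoch.le_one {a : Bundle n → ℝ} (ha : IsStoch a) (b : Bundle n) : a b ≤ 1 :=
  ha.2 ▸ Finset.single_le_sum (fun b' _ => ha.1 b') (Finset.mem_univ b)

noncomputable def virtualValue (f F w w' : ℝ → ℝ) (t : ℝ) : ℝ :=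
  w t - ((1 - F t) / f t) * w' t

structure TypeDistribution where
  t0 : ℝ
  t1 : ℝ
  t0_lt_t1 : t0 < t1
  f : ℝ → ℝ
  F : ℝ → ℝ
  continuousOn_f : ContinuousOn f (Icc t0 t1)
  f_pos : ∀ t ∈ Icc t0 t1, 0 < f t
  F_eq : ∀ t, F t = ∫ s in t0..t, f s
  F_t1 : F t1 = 1

namespace TypeDistribution

variable (D : TypeDistribution)

lemma t0_mem : D.t0 ∈ Icc D.t0 D.t1 := left_mem_Icc.2 D.t0_lt_t1.le

lemma t1_mem : D.t1 ∈ Icc D.t0 D.t1 := right_mem_Icc.2 D.t0_lt_t1.le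

lemma intervalIntegrable_f {x y : ℝ} (hx : x ∈ Icc D.t0 D.t1) (hy : y ∈ Icc D.t0 D.t1) :
    IntervalIntegrable D.f volume x y :=
  (D.continuousOn_f.mono (uIcc_subset_Icc hx hy)).intervalIntegrable

lemma one_sub_F_eq {t : ℝ} (ht : t ∈ Icc D.t0 D.t1) : 1 - D.F t = ∫ s in t..D.t1, D.f s := by
  rw [← D.F_t1, D.F_eq, D.F_eq, sub_eq_iff_eq_add',
    intervalIntegral.integral_add_adjacent_intervals
      (D.intervalIntegrable_f D.t0_mem ht)
      (D.intervalIntegrable_f ht D.t1_mem)]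

lemma one_sub_F_pos {t : ℝ} (ht0 : D.t0 ≤ t) (ht1 : t < D.t1) : 0 < 1 - D.F t := by
  rw [D.one_sub_F_eq ⟨ht0, ht1.le⟩]
  exact intervalIntegral.intervalIntegral_pos_of_pos_on
    (D.intervalIntegrable_f ⟨ht0, ht1.le⟩ D.t1_mem)
    (fun s hs => D.f_pos s ⟨ht0.trans hs.1.le, hs.2.le⟩) ht1

lemma continuousOn_F : ContinuousOn D.F (Icc D.t0 D.t1) := by
  have h : ContinuousOn (fun x => ∫ s in D.t0..x, D.f s) (uIcc D.t0 D.t1) :=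
    intervalIntegral.continuousOn_primitive_interval
      (by rw [uIcc_of_le D.t0_lt_t1.le]; exact D.continuousOn_f.integrableOn_Icc)
  rw [uIcc_of_le D.t0_lt_t1.le] at h
  exact h.congr fun t _ => D.F_eq t

lemma hasDerivAt_F {t : ℝ} (ht : t ∈ Ioo D.t0 D.t1) : HasDerivAt D.F (D.f t) t := by
  have hnhds : Icc D.t0 D.t1 ∈ 𝓝 t := Icc_mem_nhds ht.1 ht.2
  rw [show D.F = fun u => ∫ s in D.t0..u, D.f s from funext D.F_eq]
  exact intervalIntegral.integral_hasDerivAt_right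
    (D.intervalIntegrable_f D.t0_mem (Ioo_subset_Icc_self ht))
    ⟨_, hnhds, D.continuousOn_f.aestronglyMeasurable measurableSet_Icc⟩
    ((D.continuousOn_f t (Ioo_subset_Icc_self ht)).continuousAt hnhds)

variable {w w' : ℝ → ℝ}

lemma continuousOn_virtualValue (hw : ContinuousOn w (Icc D.t0 D.t1))
    (hw' : ContinuousOn w' (Icc D.t0 D.t1)) :
    ContinuousOn (virtualValue D.f D.F w w') (Icc D.t0 D.t1) :=
  hw.sub (((continuousOn_const.sub D.continuousOn_F).div D.continuousOn_f
    fun t ht => (D.f_pos t ht).ne').mul hw')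

lemma mul_one_sub_F_eq_integral (hw : ∀ t ∈ Icc D.t0 D.t1,
      HasDerivWithinAt w (w' t) (Icc D.t0 D.t1) t)
    (hw' : ContinuousOn w' (Icc D.t0 D.t1)) {t : ℝ} (ht : t ∈ Icc D.t0 D.t1) :
    w t * (1 - D.F t) = ∫ s in t..D.t1, virtualValue D.f D.F w w' s * D.f s := by
  have hwc : ContinuousOn w (Icc D.t0 D.t1) := fun s hs => (hw s hs).continuousWithinAt
  have hsub : Icc t D.t1 ⊆ Icc D.t0 D.t1 := Icc_subset_Icc_left ht.1
  have hftc := intervalIntegral.integral_eq_sub_of_hasDerivAt_of_le ht.2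
    (f := fun s => w s * (1 - D.F s)) (f' := fun s => -(virtualValue D.f D.F w w' s * D.f s))
    ((hwc.mul (continuousOn_const.sub D.continuousOn_F)).mono hsub)
    (fun x hx => by
      have hx' : x ∈ Ioo D.t0 D.t1 := ⟨ht.1.trans_lt hx.1, hx.2⟩
      have hfx : D.f x ≠ 0 := (D.f_pos x (Ioo_subset_Icc_self hx')).ne'
      refine (((hw x (Ioo_subset_Icc_self hx')).hasDerivAt (Icc_mem_nhds hx'.1 hx'.2)).mul
        ((D.hasDerivAt_F hx').const_sub 1)).congr_deriv ?_
      unfold virtualValue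
      field_simp
      ring)
    (((D.continuousOn_virtualValue hwc hw').mul D.continuousOn_f).neg.mono
      (by rwa [uIcc_of_le ht.2])).intervalIntegrable
  rw [intervalIntegral.integral_neg, D.F_t1] at hftc
  linarith

lemma monotoneOn_of_monotoneOn_virtualValue (hw : ∀ t ∈ Icc D.t0 D.t1,
      HasDerivWithinAt w (w' t) (Icc D.t0 D.t1) t)
    (hw' : ContinuousOn w' (Icc D.t0 D.t1))
    (hmono : MonotoneOn (virtualValue D.f D.F w w') (Icc D.t0 D.t1)) :
    MonotoneOn w (Icc D.t0 D.t1) := by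
  -- `w t` is an average of the nondecreasing virtual value over `[t, t1]`, hence dominates it;
  -- then `((1 - F) / f) * w' = w - virtualValue ≥ 0`.
  have hle : ∀ t ∈ Ico D.t0 D.t1, virtualValue D.f D.F w w' t ≤ w t := by
    intro t ht
    have htI : t ∈ Icc D.t0 D.t1 := Ico_subset_Icc_self ht
    have hsub : uIcc t D.t1 ⊆ Icc D.t0 D.t1 := uIcc_subset_Icc htI D.t1_mem
    refine le_of_mul_le_mul_right ?_ (D.one_sub_F_pos ht.1 ht.2)
    calc virtualValue D.f D.F w w' t * (1 - D.F t)
        = ∫ s in t..D.t1, virtualValue D.f D.F w w' t * D.f s := by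
          rw [D.one_sub_F_eq htI, intervalIntegral.integral_const_mul]
      _ ≤ ∫ s in t..D.t1, virtualValue D.f D.F w w' s * D.f s := by
          refine intervalIntegral.integral_mono_on ht.2.le
            ((continuousOn_const.mul D.continuousOn_f).mono hsub).intervalIntegrable
            (((D.continuousOn_virtualValue (fun s hs => (hw s hs).continuousWithinAt) hw').mul
              D.continuousOn_f).mono hsub).intervalIntegrable fun s hs => ?_
          have hsI : s ∈ Icc D.t0 D.t1 := ⟨ht.1.trans hs.1, hs.2⟩
          exact mul_le_mul_of_nonneg_right (hmono htI hsI hs.1) (D.f_pos s hsI).le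
      _ = w t * (1 - D.F t) := (D.mul_one_sub_F_eq_integral hw hw' htI).symm
  refine monotoneOn_of_hasDerivWithinAt_nonneg (f' := w') (convex_Icc _ _)
    (fun t ht => (hw t ht).continuousWithinAt) (fun t ht => ?_) (fun t ht => ?_)
  · rw [interior_Icc] at ht
    exact (hw t (Ioo_subset_Icc_self ht)).mono interior_subset
  · rw [interior_Icc] at ht
    have hratio : 0 < (1 - D.F t) / D.f t :=
      div_pos (D.one_sub_F_pos ht.1.le ht.2) (D.f_pos t (Ioo_subset_Icc_self ht))
    have := hle t (Ioo_subset_Ico_self ht)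
    simp only [virtualValue] at this
    nlinarith

end TypeDistribution

structure Model (n : ℕ) extends TypeDistribution where
  v : Bundle n → ℝ → ℝ
  vd : Bundle n → ℝ → ℝ
  hasDerivWithinAt_v : ∀ b, ∀ t ∈ Icc t0 t1, HasDerivWithinAt (v b) (vd b t) (Icc t0 t1) t
  continuousOn_vd : ∀ b, ContinuousOn (vd b) (Icc t0 t1)
  v_empty : ∀ t ∈ Icc t0 t1, v ∅ t = 0
  φ : Bundle n → ℝ → ℝ
  φ_eq : ∀ b, ∀ t ∈ Icc t0 t1, φ b t = virtualValue f F (v b) (vd b) t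
  φ_empty_t0 : φ ∅ t0 = 0
  φ_neg_t0 : ∀ b : Bundle n, b ≠ ∅ → φ b t0 < 0
  monotoneOn_or_antitoneOn_φ_sub : ∀ b b' : Bundle n,
    MonotoneOn (fun t => φ b t - φ b' t) (Icc t0 t1) ∨
      AntitoneOn (fun t => φ b t - φ b' t) (Icc t0 t1)

namespace Model

variable (C : Model n)

lemma continuousOn_v (b : Bundle n) : ContinuousOn (C.v b) (Icc C.t0 C.t1) :=
  fun t ht => (C.hasDerivWithinAt_v b t ht).continuousWithinAt

lemma continuousOn_φ (b : Bundle n) : ContinuousOn (C.φ b) (Icc C.t0 C.t1) :=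
  (C.continuousOn_virtualValue (C.continuousOn_v b) (C.continuousOn_vd b)).congr (C.φ_eq b)

lemma monotoneOn_v_sub {b b' : Bundle n}
    (h : MonotoneOn (fun t => C.φ b t - C.φ b' t) (Icc C.t0 C.t1)) :
    MonotoneOn (fun t => C.v b t - C.v b' t) (Icc C.t0 C.t1) := by
  refine C.monotoneOn_of_monotoneOn_virtualValue (w' := fun t => C.vd b t - C.vd b' t)
    (fun t ht => (C.hasDerivWithinAt_v b t ht).sub (C.hasDerivWithinAt_v b' t ht))
    ((C.continuousOn_vd b).sub (C.continuousOn_vd b')) (h.congr fun t ht => ?_)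
  simp only [C.φ_eq b t ht, C.φ_eq b' t ht, virtualValue]
  ring

noncomputable def envelope (t : ℝ) : ℝ :=
  Finset.univ.sup' Finset.univ_nonempty fun b : Bundle n => C.φ b t

lemma φ_le_envelope (b : Bundle n) (t : ℝ) : C.φ b t ≤ C.envelope t :=
  Finset.le_sup' (fun b : Bundle n => C.φ b t) (Finset.mem_univ b)

lemma continuousOn_envelope : ContinuousOn C.envelope (Icc C.t0 C.t1) :=
  ContinuousOn.finset_sup'_apply _ fun b _ => C.continuousOn_φ b

def argmaxSet (b : Bundle n) : Set ℝ := {t ∈ Icc C.t0 C.t1 | ∀ b', C.φ b' t ≤ C.φ b t}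

lemma argmaxSet_subset (b : Bundle n) : C.argmaxSet b ⊆ Icc C.t0 C.t1 := fun _ ht => ht.1

lemma envelope_eq_of_mem_argmaxSet {b : Bundle n} {t : ℝ} (ht : t ∈ C.argmaxSet b) :
    C.envelope t = C.φ b t :=
  le_antisymm (Finset.sup'_le _ _ fun b' _ => ht.2 b') (C.φ_le_envelope b t)

lemma isCompact_argmaxSet (b : Bundle n) : IsCompact (C.argmaxSet b) := by
  have hclosed : IsClosed (C.argmaxSet b) := by
    have : C.argmaxSet b = ⋂ b', {t ∈ Icc C.t0 C.t1 | C.φ b' t ≤ C.φ b t} := by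
      ext t
      simp [argmaxSet, forall_and]
    rw [this]
    exact isClosed_iInter fun b' =>
      isClosed_Icc.isClosed_le (C.continuousOn_φ b') (C.continuousOn_φ b)
  exact isCompact_Icc.of_isClosed_subset hclosed (C.argmaxSet_subset b)

lemma ordConnected_argmaxSet (b : Bundle n) : (C.argmaxSet b).OrdConnected := by
  refine ⟨fun x hx y hy z hz => ⟨⟨hx.1.1.trans hz.1, hz.2.trans hy.1.2⟩, fun b' => ?_⟩⟩
  have hzI : z ∈ Icc C.t0 C.t1 := ⟨hx.1.1.trans hz.1, hz.2.trans hy.1.2⟩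
  rcases C.monotoneOn_or_antitoneOn_φ_sub b' b with hmono | hanti
  · linarith [hmono hzI hy.1 hz.2, hy.2 b']
  · linarith [hanti hx.1 hzI hz.1, hx.2 b']

lemma t0_mem_argmaxSet_empty : C.t0 ∈ C.argmaxSet ∅ := by
  refine ⟨C.t0_mem, fun b => ?_⟩
  rcases eq_or_ne b ∅ with rfl | hb
  · exact le_rfl
  · exact C.φ_empty_t0 ▸ (C.φ_neg_t0 b hb).le

noncomputable def argmaxSup (b : Bundle n) : ℝ := sSup (C.argmaxSet b)

lemma argmaxSup_mem {b : Bundle n} (hb : (C.argmaxSet b).Nonempty) :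
    C.argmaxSup b ∈ C.argmaxSet b :=
  (C.isCompact_argmaxSet b).sSup_mem hb

lemma le_argmaxSup {b : Bundle n} {t : ℝ} (ht : t ∈ C.argmaxSet b) : t ≤ C.argmaxSup b :=
  le_csSup (C.isCompact_argmaxSet b).bddAbove ht

lemma monotoneOn_φ_sub_of_argmaxSup_lt {b c : Bundle n} (hb : (C.argmaxSet b).Nonempty)
    (hc : (C.argmaxSet c).Nonempty) (hbc : C.argmaxSup b < C.argmaxSup c) :
    MonotoneOn (fun t => C.φ c t - C.φ b t) (Icc C.t0 C.t1) := by
  refine (C.monotoneOn_or_antitoneOn_φ_sub c b).resolve_right fun hanti => ?_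
  have hβb := C.argmaxSup_mem hb
  have hβc := C.argmaxSup_mem hc
  have hcb : C.argmaxSup c ∈ C.argmaxSet b := by
    refine ⟨hβc.1, fun b' => ?_⟩
    linarith [hanti hβb.1 hβc.1 hbc.le, hβb.2 c, hβc.2 b, hβc.2 b']
  exact (C.le_argmaxSup hcb).not_gt hbc

end Model

structure EnvelopeChain (C : Model n) (M : Finset (Bundle n)) where
  len : ℕ
  bundle : ℕ → Bundle n
  knot : ℕ → ℝ
  bundle_zero : bundle 0 = ∅
  bundle_mem : ∀ i ≤ len, bundle i ∈ M
  knot_zero : knot 0 = C.t0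
  knot_len : knot (len + 1) = C.t1
  knot_le_succ : ∀ i ≤ len, knot i ≤ knot (i + 1)
  Icc_knot_subset : ∀ i ≤ len, Icc (knot i) (knot (i + 1)) ⊆ C.argmaxSet (bundle i)
  monotoneOn_φ_sub : ∀ i < len,
    MonotoneOn (fun t => C.φ (bundle (i + 1)) t - C.φ (bundle i) t) (Icc C.t0 C.t1)

namespace Model

variable (C : Model n) {M : Finset (Bundle n)}

lemma empty_mem_of_ueOptimal (hM : UEOptimal C.φ C.t0 C.t1 M) : (∅ : Bundle n) ∈ M := by
  obtain ⟨b, hbM, hb⟩ := hM C.t0 C.t0_mem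
  by_cases hb0 : b = ∅
  · exact hb0 ▸ hbM
  · linarith [hb ∅, C.φ_neg_t0 b hb0, C.φ_empty_t0]

lemma ueOptimal_univ : UEOptimal C.φ C.t0 C.t1 Finset.univ := fun t _ =>
  let ⟨b, hb, hmax⟩ := Finset.exists_max_image Finset.univ (C.φ · t) Finset.univ_nonempty
  ⟨b, hb, fun b' => hmax b' (Finset.mem_univ b')⟩

/-- The argmax sets of the bundles of `M` that reach beyond `argmaxSup b` form a closed set
containing `(argmaxSup b, t1]`, hence also `argmaxSup b`. -/
lemma exists_argmaxSup_mem_argmaxSet (hM : UEOptimal C.φ C.t0 C.t1 M) {b : Bundle n}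
    (hb : (C.argmaxSet b).Nonempty) (hlt : C.argmaxSup b < C.t1) :
    ∃ c ∈ M, C.argmaxSup b ∈ C.argmaxSet c ∧ C.argmaxSup b < C.argmaxSup c := by
  set W := M.filter fun c => C.argmaxSup b < C.argmaxSup c
  have hcover : Ioc (C.argmaxSup b) C.t1 ⊆ ⋃ c ∈ W, C.argmaxSet c := by
    intro x hx
    have hxI : x ∈ Icc C.t0 C.t1 := ⟨(C.argmaxSup_mem hb).1.1.trans hx.1.le, hx.2⟩
    obtain ⟨c, hcM, hc⟩ := hM x hxI
    refine mem_biUnion (Finset.mem_filter.2 ⟨hcM, hx.1.trans_le (C.le_argmaxSup ⟨hxI, hc⟩)⟩)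
      ⟨hxI, hc⟩
  have hclosed : IsClosed (⋃ c ∈ W, C.argmaxSet c) :=
    isClosed_biUnion_finset fun c _ => (C.isCompact_argmaxSet c).isClosed
  have hmem := hclosed.closure_subset_iff.2 hcover
    (by rw [closure_Ioc hlt.ne]; exact left_mem_Icc.2 hlt.le)
  obtain ⟨c, hcW, hc⟩ := mem_iUnion₂.1 hmem
  exact ⟨c, (Finset.mem_filter.1 hcW).1, hc, (Finset.mem_filter.1 hcW).2⟩

/-- Starting from `∅` and repeatedly jumping to a bundle whose argmax set contains the current
right end, the right ends strictly increase; as `M` is finite they reach `t1`. -/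
lemma exists_walk (hM : UEOptimal C.φ C.t0 C.t1 M) :
    ∃ (k : ℕ) (b : ℕ → Bundle n), b 0 = ∅ ∧ C.argmaxSup (b k) = C.t1 ∧
      (∀ i ≤ k, b i ∈ M ∧ (C.argmaxSet (b i)).Nonempty) ∧
      ∀ j < k, C.argmaxSup (b j) ∈ C.argmaxSet (b (j + 1)) ∧
        C.argmaxSup (b j) < C.argmaxSup (b (j + 1)) := by
  have step : ∀ b : Bundle n, ∃ c, (C.argmaxSet b).Nonempty → C.argmaxSup b ≠ C.t1 →
      c ∈ M ∧ C.argmaxSup b ∈ C.argmaxSet c ∧ C.argmaxSup b < C.argmaxSup c := fun b => by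
    by_cases h : (C.argmaxSet b).Nonempty ∧ C.argmaxSup b ≠ C.t1
    · obtain ⟨c, hc⟩ := C.exists_argmaxSup_mem_argmaxSet hM h.1
        (((C.argmaxSup_mem h.1).1.2).lt_of_ne h.2)
      exact ⟨c, fun _ _ => hc⟩
    · exact ⟨b, fun h1 h2 => absurd ⟨h1, h2⟩ h⟩
  choose next hnext using step
  set b : ℕ → Bundle n := fun i => next^[i] ∅
  have hb_succ : ∀ i, b (i + 1) = next (b i) := fun i => Function.iterate_succ_apply' _ _ _
  have hwalk : ∀ i, (∀ j < i, C.argmaxSup (b j) ≠ C.t1) →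
      b i ∈ M ∧ (C.argmaxSet (b i)).Nonempty := by
    intro i
    induction i with
    | zero => exact fun _ => ⟨C.empty_mem_of_ueOptimal hM, _, C.t0_mem_argmaxSet_empty⟩
    | succ i ih =>
      intro hne
      have hbi := (ih fun j hj => hne j (hj.trans i.lt_succ_self)).2
      obtain ⟨hM', hmem, -⟩ := hnext (b i) hbi (hne i i.lt_succ_self)
      exact hb_succ i ▸ ⟨hM', _, hmem⟩
  have hreach : ∃ k, C.argmaxSup (b k) = C.t1 := by
    by_contra! hne
    have hmono : StrictMono fun i => C.argmaxSup (b i) := strictMono_nat_of_lt_succ fun i => by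
      simpa only [hb_succ] using (hnext (b i) (hwalk i fun j _ => hne j).2 (hne i)).2.2
    exact (Set.infinite_range_of_injective (hmono.injective.of_comp (f := C.argmaxSup))).mono
      (by rintro _ ⟨i, rfl⟩; exact (hwalk i fun j _ => hne j).1) M.finite_toSet
  have hgood : ∀ i ≤ Nat.find hreach, b i ∈ M ∧ (C.argmaxSet (b i)).Nonempty := fun i hi =>
    hwalk i fun j hj => Nat.find_min hreach (hj.trans_le hi)
  refine ⟨Nat.find hreach, b, rfl, Nat.find_spec hreach, hgood, fun j hj => ?_⟩
  simpa only [hb_succ] using (hnext (b j) (hgood j hj.le).2 (Nat.find_min hreach hj)).2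

lemma nonempty_envelopeChain (hM : UEOptimal C.φ C.t0 C.t1 M) :
    Nonempty (EnvelopeChain C M) := by
  obtain ⟨k, b, hb0, hbk, hgood, hstep⟩ := C.exists_walk hM
  refine ⟨⟨k, b, fun i => Nat.casesOn i C.t0 fun j => C.argmaxSup (b j), hb0,
    fun i hi => (hgood i hi).1, rfl, hbk, fun i hi => ?_, fun i hi => ?_,
    fun i hi => C.monotoneOn_φ_sub_of_argmaxSup_lt (hgood i hi.le).2 (hgood (i + 1) hi).2
      (hstep i hi).2⟩⟩
  · cases i with
    | zero => exact (C.argmaxSup_mem (hgood 0 hi).2).1.1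
    | succ j => exact (hstep j hi).2.le
  · refine (C.ordConnected_argmaxSet (b i)).out ?_ (C.argmaxSup_mem (hgood i hi).2)
    cases i with
    | zero => exact hb0 ▸ C.t0_mem_argmaxSet_empty
    | succ j => exact (hstep j hi).1

end Model

namespace EnvelopeChain

variable {C : Model n} {M : Finset (Bundle n)} (ch : EnvelopeChain C M)

lemma monotoneOn_knot : MonotoneOn ch.knot (Iic (ch.len + 1)) :=
  monotoneOn_of_le_succ ordConnected_Iic fun i _ _ hi =>
    ch.knot_le_succ i (Nat.succ_le_succ_iff.1 (by simpa using hi))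

lemma knot_mem {i : ℕ} (hi : i ≤ ch.len + 1) : ch.knot i ∈ Icc C.t0 C.t1 :=
  ⟨ch.knot_zero ▸ ch.monotoneOn_knot (mem_Iic.2 (Nat.zero_le _)) hi (Nat.zero_le i),
    ch.knot_len ▸ ch.monotoneOn_knot hi (mem_Iic.2 le_rfl) hi⟩

noncomputable def piece (t : ℝ) : ℕ := Nat.findGreatest (fun i => ch.knot i ≤ t) ch.len

lemma piece_le (t : ℝ) : ch.piece t ≤ ch.len := Nat.findGreatest_le _

lemma monotone_piece : Monotone ch.piece := fun _ _ hst =>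
  Nat.findGreatest_mono (fun _ h => h.trans hst) le_rfl

lemma knot_piece_le {t : ℝ} (ht : C.t0 ≤ t) : ch.knot (ch.piece t) ≤ t :=
  Nat.findGreatest_spec (P := fun i => ch.knot i ≤ t) (Nat.zero_le _) (ch.knot_zero ▸ ht)

lemma le_knot_piece_succ {t : ℝ} (ht : t ≤ C.t1) : t ≤ ch.knot (ch.piece t + 1) := by
  rcases (ch.piece_le t).lt_or_eq with hlt | heq
  · exact (not_le.1 (Nat.findGreatest_is_greatest (P := fun i => ch.knot i ≤ t)
      (Nat.lt_succ_self _) hlt)).le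
  · rw [heq, ch.knot_len]
    exact ht

lemma mem_argmaxSet_piece {t : ℝ} (ht : t ∈ Icc C.t0 C.t1) :
    t ∈ C.argmaxSet (ch.bundle (ch.piece t)) :=
  ch.Icc_knot_subset _ (ch.piece_le t) ⟨ch.knot_piece_le ht.1, ch.le_knot_piece_succ ht.2⟩

/-- The type `knot (j + 1)` is indifferent between the items `j` and `j + 1` of the menu. -/
noncomputable def price (j : ℕ) : ℝ :=
  ∑ l ∈ Finset.range j,
    (C.v (ch.bundle (l + 1)) (ch.knot (l + 1)) - C.v (ch.bundle l) (ch.knot (l + 1)))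

noncomputable def utility (t : ℝ) (j : ℕ) : ℝ := C.v (ch.bundle j) t - ch.price j

lemma utility_zero {t : ℝ} (ht : t ∈ Icc C.t0 C.t1) : ch.utility t 0 = 0 := by
  simp [utility, price, ch.bundle_zero, C.v_empty t ht]

lemma utility_succ (t : ℝ) (j : ℕ) : ch.utility t (j + 1) = ch.utility t j +
    ((C.v (ch.bundle (j + 1)) t - C.v (ch.bundle j) t) -
      (C.v (ch.bundle (j + 1)) (ch.knot (j + 1)) - C.v (ch.bundle j) (ch.knot (j + 1)))) := by
  simp only [utility, price, Finset.sum_range_succ]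
  ring

lemma monotoneOn_utility {t : ℝ} (ht : t ∈ Icc C.t0 C.t1) {m : ℕ} (hm : m ≤ ch.len)
    (hknot : ch.knot m ≤ t) : MonotoneOn (ch.utility t) (Iic m) := by
  refine monotoneOn_of_le_succ ordConnected_Iic fun j _ _ hj => ?_
  rw [Order.succ_eq_add_one, mem_Iic] at hj
  have hjk : ch.knot (j + 1) ≤ t :=
    (ch.monotoneOn_knot (mem_Iic.2 (by omega)) (mem_Iic.2 (by omega)) hj).trans hknot
  have := C.monotoneOn_v_sub (ch.monotoneOn_φ_sub j (by omega))
    (ch.knot_mem (by omega)) ht hjk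
  rw [Order.succ_eq_add_one, ch.utility_succ]
  linarith

lemma antitoneOn_utility {t : ℝ} (ht : t ∈ Icc C.t0 C.t1) {m : ℕ}
    (hknot : t ≤ ch.knot (m + 1)) : AntitoneOn (ch.utility t) (Icc m ch.len) := by
  refine antitoneOn_of_succ_le ordConnected_Icc fun j _ hj hj' => ?_
  rw [mem_Icc] at hj
  rw [Order.succ_eq_add_one, mem_Icc] at hj'
  have htj : t ≤ ch.knot (j + 1) :=
    hknot.trans (ch.monotoneOn_knot (mem_Iic.2 (by omega)) (mem_Iic.2 (by omega))
      (by omega : m + 1 ≤ j + 1))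
  have := C.monotoneOn_v_sub (ch.monotoneOn_φ_sub j (by omega)) ht
    (ch.knot_mem (by omega)) htj
  rw [Order.succ_eq_add_one, ch.utility_succ]
  linarith

lemma utility_le_utility_piece {t : ℝ} (ht : t ∈ Icc C.t0 C.t1) {j : ℕ} (hj : j ≤ ch.len) :
    ch.utility t j ≤ ch.utility t (ch.piece t) := by
  rcases le_total j (ch.piece t) with h | h
  · exact ch.monotoneOn_utility ht (ch.piece_le t) (ch.knot_piece_le ht.1) h (mem_Iic.2 le_rfl) h
  · exact ch.antitoneOn_utility ht (ch.le_knot_piece_succ ht.2) ⟨le_rfl, ch.piece_le t⟩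
      ⟨h, hj⟩ h

lemma utility_t0_piece_le : ch.utility C.t0 (ch.piece C.t0) ≤ 0 :=
  ch.utility_zero C.t0_mem ▸ ch.antitoneOn_utility C.t0_mem (ch.knot_mem (by omega)).1
    ⟨le_rfl, Nat.zero_le _⟩ ⟨Nat.zero_le _, ch.piece_le _⟩ (Nat.zero_le _)

noncomputable def mech : Mech n :=
  ⟨fun t => pt (ch.bundle (ch.piece t)), fun t => ch.price (ch.piece t)⟩

lemma isValidMech_mech : IsValidMech C.t0 C.t1 ch.mech :=
  ⟨fun _ _ => isStoch_pt _,
    fun b => (measurable_from_nat (f := fun j => pt (ch.bundle j) b)).comp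
      ch.monotone_piece.measurable,
    (measurable_from_nat (f := ch.price)).comp ch.monotone_piece.measurable⟩

lemma ic_mech : IC C.v C.t0 C.t1 ch.mech := fun t ht t' _ => by
  simp only [mech, vA_pt]
  exact ch.utility_le_utility_piece ht (ch.piece_le t')

lemma ir_mech : IR C.v C.t0 C.t1 ch.mech := fun t ht => by
  simp only [mech, vA_pt]
  exact ch.utility_zero ht ▸ ch.utility_le_utility_piece ht (Nat.zero_le _)

lemma integral_envelope_le_vval :
    ∫ t in C.t0..C.t1, C.envelope t * C.f t ≤ Vval C.v C.φ C.f C.t0 C.t1 ch.mech := by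
  have hsurplus : ∫ t in C.t0..C.t1, (∑ b, ch.mech.alloc t b * C.φ b t) * C.f t =
      ∫ t in C.t0..C.t1, C.envelope t * C.f t := by
    refine intervalIntegral.integral_congr fun t ht => ?_
    rw [uIcc_of_le C.t0_lt_t1.le] at ht
    simp only [mech, sum_pt_mul, C.envelope_eq_of_mem_argmaxSet (ch.mem_argmaxSet_piece ht)]
  have hU0 := ch.utility_t0_piece_le
  rw [Vval, hsurplus]
  simp only [mech, vA_pt]
  simp only [utility] at hU0
  linarith

end EnvelopeChain

namespace Model

variable (C : Model n)

lemma intervalIntegrable_virtualSurplus {m : Mech n} (hm : IsValidMech C.t0 C.t1 m) :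
    IntervalIntegrable (fun t => (∑ b, m.alloc t b * C.φ b t) * C.f t) volume C.t0 C.t1 := by
  have hterm : ∀ b ∈ Finset.univ,
      IntervalIntegrable (fun t => m.alloc t b * (C.φ b t * C.f t)) volume C.t0 C.t1 := by
    intro b _
    rw [intervalIntegrable_iff_integrableOn_Ioc_of_le C.t0_lt_t1.le]
    refine Integrable.bdd_mul (c := 1)
      ((((C.continuousOn_φ b).mul C.continuousOn_f).integrableOn_Icc).mono_set
        Ioc_subset_Icc_self)
      (hm.2.1 b).aestronglyMeasurable ?_
    refine (ae_restrict_iff' measurableSet_Ioc).2 (ae_of_all _ fun t ht => ?_)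
    have hst := hm.1 t (Ioc_subset_Icc_self ht)
    rw [Real.norm_eq_abs, abs_of_nonneg (hst.1 b)]
    exact hst.le_one b
  simpa only [Finset.sum_fn, Finset.sum_mul, mul_assoc] using IntervalIntegrable.sum _ hterm

lemma vval_le_integral {m : Mech n} (hm : IsValidMech C.t0 C.t1 m) (hIR : IR C.v C.t0 C.t1 m)
    {Ψ : ℝ → ℝ} (hΨ : ContinuousOn Ψ (Icc C.t0 C.t1))
    (hle : ∀ t ∈ Icc C.t0 C.t1, ∑ b, m.alloc t b * C.φ b t ≤ Ψ t) :
    Vval C.v C.φ C.f C.t0 C.t1 m ≤ ∫ t in C.t0..C.t1, Ψ t * C.f t := by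
  have hsurplus := intervalIntegral.integral_mono_on (g := fun t => Ψ t * C.f t) C.t0_lt_t1.le
    (C.intervalIntegrable_virtualSurplus hm)
    ((hΨ.mul C.continuousOn_f).intervalIntegrable_of_Icc C.t0_lt_t1.le)
    fun t ht => mul_le_mul_of_nonneg_right (hle t ht) (C.f_pos t ht).le
  unfold Vval
  linarith [hIR C.t0 C.t0_mem]

lemma vval_le_integral_envelope {m : Mech n} (hm : IsValidMech C.t0 C.t1 m)
    (hIR : IR C.v C.t0 C.t1 m) :
    Vval C.v C.φ C.f C.t0 C.t1 m ≤ ∫ t in C.t0..C.t1, C.envelope t * C.f t :=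
  C.vval_le_integral hm hIR C.continuousOn_envelope fun t ht => by
    obtain ⟨hnn, hsum⟩ := hm.1 t ht
    calc ∑ b, m.alloc t b * C.φ b t ≤ ∑ b, m.alloc t b * C.envelope t :=
          Finset.sum_le_sum fun b _ => mul_le_mul_of_nonneg_left (C.φ_le_envelope b t) (hnn b)
      _ = C.envelope t := by rw [← Finset.sum_mul, hsum, one_mul]

lemma integral_envelope_le_vval_of_optimalMech {m : Mech n}
    (hm : OptimalMech C.v C.φ C.f C.t0 C.t1 m) :
    ∫ t in C.t0..C.t1, C.envelope t * C.f t ≤ Vval C.v C.φ C.f C.t0 C.t1 m := by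
  obtain ⟨ch⟩ := C.nonempty_envelopeChain C.ueOptimal_univ
  exact ch.integral_envelope_le_vval.trans
    (hm.2.2.2 _ ch.isValidMech_mech ch.ic_mech ch.ir_mech)

lemma mpOptimal_of_ueOptimal {M : Finset (Bundle n)} (hM : UEOptimal C.φ C.t0 C.t1 M) :
    MPOptimal C.v C.φ C.f C.t0 C.t1 M := by
  obtain ⟨ch⟩ := C.nonempty_envelopeChain hM
  refine ⟨ch.mech, ⟨ch.isValidMech_mech, ch.ic_mech, ch.ir_mech, fun m' hm' _ hIR' =>
    (C.vval_le_integral_envelope hm' hIR').trans ch.integral_envelope_le_vval⟩,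
    fun t _ => ⟨_, ch.bundle_mem _ (ch.piece_le t), rfl⟩⟩

lemma ueOptimal_of_mpOptimal {M : Finset (Bundle n)} (hM : MPOptimal C.v C.φ C.f C.t0 C.t1 M) :
    UEOptimal C.φ C.t0 C.t1 M := by
  obtain ⟨m, hopt, hmM⟩ := hM
  have hMne : M.Nonempty := let ⟨b, hb, _⟩ := hmM C.t0 C.t0_mem; ⟨b, hb⟩
  set envM : ℝ → ℝ := fun t => M.sup' hMne fun b => C.φ b t
  have henvM : ContinuousOn envM (Icc C.t0 C.t1) :=
    ContinuousOn.finset_sup'_apply _ fun b _ => C.continuousOn_φ b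
  have hupper : Vval C.v C.φ C.f C.t0 C.t1 m ≤ ∫ t in C.t0..C.t1, envM t * C.f t :=
    C.vval_le_integral hopt.1 hopt.2.2.1 henvM fun t ht => by
      obtain ⟨b, hbM, hb⟩ := hmM t ht
      rw [hb, sum_pt_mul]
      exact Finset.le_sup' (fun b => C.φ b t) hbM
  have hlower := C.integral_envelope_le_vval_of_optimalMech hopt
  intro t ht
  obtain ⟨b, hbM, hb⟩ := Finset.exists_mem_eq_sup' hMne fun b => C.φ b t
  refine ⟨b, hbM, fun b' => (C.φ_le_envelope b' t).trans ?_⟩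
  by_contra! hlt
  have hstrict : ∫ s in C.t0..C.t1, envM s * C.f s < ∫ s in C.t0..C.t1, C.envelope s * C.f s :=
    intervalIntegral.integral_lt_integral_of_continuousOn_of_le_of_exists_lt C.t0_lt_t1
      (henvM.mul C.continuousOn_f) (C.continuousOn_envelope.mul C.continuousOn_f)
      (fun s hs => mul_le_mul_of_nonneg_right (Finset.sup'_le _ _ fun b _ => C.φ_le_envelope b s)
        (C.f_pos s (Ioc_subset_Icc_self hs)).le)
      ⟨t, ht, mul_lt_mul_of_pos_right (hb.trans_lt hlt) (C.f_pos t ht)⟩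
  linarith

lemma mpOptimal_iff_ueOptimal (M : Finset (Bundle n)) :
    MPOptimal C.v C.φ C.f C.t0 C.t1 M ↔ UEOptimal C.φ C.t0 C.t1 M :=
  ⟨C.ueOptimal_of_mpOptimal, C.mpOptimal_of_ueOptimal⟩

end Model

theorem stmt1_general (t0 t1 : ℝ) (ht : t0 < t1)
    (f F : ℝ → ℝ)
    (hf_cont : ContinuousOn f (Set.Icc t0 t1))
    (hf_pos : ∀ t ∈ Set.Icc t0 t1, 0 < f t)
    (hF : ∀ t, F t = ∫ s in t0..t, f s)
    (hF1 : F t1 = 1)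
    (v vd : Bundle n → ℝ → ℝ)
    (hv_deriv : ∀ b : Bundle n, ∀ t ∈ Set.Icc t0 t1,
      HasDerivWithinAt (v b) (vd b t) (Set.Icc t0 t1) t)
    (hvd_cont : ∀ b : Bundle n, ContinuousOn (vd b) (Set.Icc t0 t1))
    (hv_empty : ∀ t ∈ Set.Icc t0 t1, v (∅ : Bundle n) t = 0)
    (φ : Bundle n → ℝ → ℝ)
    (hφ : ∀ b : Bundle n, ∀ t ∈ Set.Icc t0 t1,
      φ b t = v b t - ((1 - F t) / f t) * vd b t)
    (hempty0 : φ (∅ : Bundle n) t0 = 0)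
    (hneg : ∀ b : Bundle n, b ≠ ∅ → φ b t0 < 0)
    (hMD : ∀ b b' : Bundle n,
      MonotoneOn (fun t => φ b t - φ b' t) (Set.Icc t0 t1) ∨
      AntitoneOn (fun t => φ b t - φ b' t) (Set.Icc t0 t1))
    (M : Finset (Bundle n)) :
    MinimalMPOptimal v φ f t0 t1 M ↔ MinimalUEOptimal φ t0 t1 M := by
  let C : Model n :=
    { t0, t1, f, F, v, vd, φ
      t0_lt_t1 := ht, continuousOn_f := hf_cont, f_pos := hf_pos, F_eq := hF, F_t1 := hF1
      hasDerivWithinAt_v := hv_deriv, continuousOn_vd := hvd_cont, v_empty := hv_empty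
      φ_eq := hφ, φ_empty_t0 := hempty0, φ_neg_t0 := hneg
      monotoneOn_or_antitoneOn_φ_sub := hMD }
  have h : ∀ M', MPOptimal v φ f t0 t1 M' ↔ UEOptimal φ t0 t1 M' := C.mpOptimal_iff_ueOptimal
  simp only [MinimalMPOptimal, MinimalUEOptimal, h]

/-- **Theorem 1.** Under Assumption MD, the minimal optimal menus of the monopolist's
virtual-surplus problem coincide with the minimal optimal menus of the unconstrained
upper-envelope problem. -/
theorem stmt1 (hn : 1 ≤ n) (t0 t1 : ℝ) (ht : t0 < t1)
    (f F : ℝ → ℝ)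
    (hf_cont : ContinuousOn f (Set.Icc t0 t1))
    (hf_pos : ∀ t ∈ Set.Icc t0 t1, 0 < f t)
    (hF : ∀ t, F t = ∫ s in t0..t, f s)
    (hF1 : F t1 = 1)
    (v vd : Bundle n → ℝ → ℝ)
    (hv_deriv : ∀ b : Bundle n, ∀ t ∈ Set.Icc t0 t1,
      HasDerivWithinAt (v b) (vd b t) (Set.Icc t0 t1) t)
    (hvd_cont : ∀ b : Bundle n, ContinuousOn (vd b) (Set.Icc t0 t1))
    (hv_empty : ∀ t ∈ Set.Icc t0 t1, v (∅ : Bundle n) t = 0)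
    (φ : Bundle n → ℝ → ℝ)
    (hφ : ∀ b : Bundle n, ∀ t ∈ Set.Icc t0 t1,
      φ b t = v b t - ((1 - F t) / f t) * vd b t)
    (hdist : ∀ b b' : Bundle n, b ≠ b' → ∃ t ∈ Set.Icc t0 t1, φ b t ≠ φ b' t)
    (hempty0 : φ (∅ : Bundle n) t0 = 0)
    (hneg : ∀ b : Bundle n, b ≠ ∅ → φ b t0 < 0)
    (hMD : ∀ b b' : Bundle n,
      MonotoneOn (fun t => φ b t - φ b' t) (Set.Icc t0 t1) ∨
      AntitoneOn (fun t => φ b t - φ b' t) (Set.Icc t0 t1))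
    (M : Finset (Bundle n)) :
    MinimalMPOptimal v φ f t0 t1 M ↔ MinimalUEOptimal φ t0 t1 M :=
  stmt1_general t0 t1 ht f F hf_cont hf_pos hF hF1 v vd hv_deriv hvd_cont hv_empty φ hφ hempty0 hneg
    hMD M

end Stmt1
end

section
/- Under Assumption SCD*, a bundle b ∈ B is a never strict best response if and only if b is very weakly dominated. -/
namespace Paper

abbrev Bundle (n : ℕ) := Finset (Fin n)

variable {n : ℕ}

/-- A stochastic bundle: nonnegative weights on bundles summing to one. -/
def IsStoch (a : Bundle n → ℝ) : Prop :=
  (∀ b, 0 ≤ a b) ∧ ∑ b, a b = 1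

/-- The point mass at a bundle, viewed as a stochastic bundle. -/
def pt (b : Bundle n) : Bundle n → ℝ := fun b' => if b' = b then 1 else 0

/-- Virtual value of a stochastic bundle (linear extension). -/
def phiA (φ : Bundle n → ℝ → ℝ) (a : Bundle n → ℝ) (t : ℝ) : ℝ :=
  ∑ b, a b * φ b t

/-- A function is single-crossing on a set: its sign is monotone there. -/
def SingleCrossingOn (g : ℝ → ℝ) (T : Set ℝ) : Prop :=
  MonotoneOn (fun t => Real.sign (g t)) T ∨ AntitoneOn (fun t => Real.sign (g t)) T

/-- Assumption SCD*: differences of virtual values of stochastic bundles are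
single-crossing in the type. -/
def SCDstar (φ : Bundle n → ℝ → ℝ) (t0 t1 : ℝ) : Prop :=
  ∀ a a' : Bundle n → ℝ, IsStoch a → IsStoch a' →
    SingleCrossingOn (fun t => phiA φ a t - phiA φ a' t) (Set.Icc t0 t1)

/-- Assumption MD: differences of virtual values of deterministic bundles are
monotone in the type. -/
def MD (φ : Bundle n → ℝ → ℝ) (t0 t1 : ℝ) : Prop :=
  ∀ b b' : Bundle n,
    MonotoneOn (fun t => φ b t - φ b' t) (Set.Icc t0 t1) ∨
    AntitoneOn (fun t => φ b t - φ b' t) (Set.Icc t0 t1)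

/-- No two distinct bundles have identical virtual value functions on T. -/
def Distinct (φ : Bundle n → ℝ → ℝ) (t0 t1 : ℝ) : Prop :=
  ∀ b b' : Bundle n, b ≠ b' → ∃ t ∈ Set.Icc t0 t1, φ b t ≠ φ b' t

/-- A stochastic bundle is very weakly dominated. -/
def VWD (φ : Bundle n → ℝ → ℝ) (t0 t1 : ℝ) (a : Bundle n → ℝ) : Prop :=
  ∃ a' : Bundle n → ℝ, IsStoch a' ∧ a' ≠ a ∧
    ∀ t ∈ Set.Icc t0 t1, phiA φ a t ≤ phiA φ a' t

/-- A bundle is a never strict best response. -/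
def NeverStrictBR (φ : Bundle n → ℝ → ℝ) (t0 t1 : ℝ) (b : Bundle n) : Prop :=
  ∀ t ∈ Set.Icc t0 t1, ∃ b' : Bundle n, b' ≠ b ∧ φ b t ≤ φ b' t

/-- A menu is optimal if at every type some element attains the upper envelope. -/
def OptimalMenu (φ : Bundle n → ℝ → ℝ) (t0 t1 : ℝ) (S : Finset (Bundle n)) : Prop :=
  ∀ t ∈ Set.Icc t0 t1, ∃ b ∈ S, ∀ b' : Bundle n, φ b' t ≤ φ b t

/-- A minimal optimal menu. -/
def MinimalOptimalMenu (φ : Bundle n → ℝ → ℝ) (t0 t1 : ℝ) (S : Finset (Bundle n)) : Prop :=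
  OptimalMenu φ t0 t1 S ∧ ∀ S' : Finset (Bundle n), S' ⊂ S → ¬ OptimalMenu φ t0 t1 S'

/-- A nested menu: any two elements are comparable under set inclusion. -/
def IsNestedMenu (S : Finset (Bundle n)) : Prop :=
  ∀ b1 ∈ S, ∀ b2 ∈ S, b1 ⊆ b2 ∨ b2 ⊆ b1

/-- A tree menu: a nonempty root contained in every nonempty element, and two
incomparable elements. -/
def IsTreeMenu (S : Finset (Bundle n)) : Prop :=
  (∃ r ∈ S, r ≠ (∅ : Bundle n) ∧ ∀ b ∈ S, b ≠ (∅ : Bundle n) → r ⊆ b) ∧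
  (∃ b1 ∈ S, ∃ b2 ∈ S, ¬ b1 ⊆ b2 ∧ ¬ b2 ⊆ b1)

private lemma sign_nonneg_iff {x : ℝ} : 0 ≤ Real.sign x ↔ 0 ≤ x := by
  rcases lt_trichotomy x 0 with h | h | h
  · simp [Real.sign_of_neg h, h.not_ge]
  · simp [h]
  · simp [Real.sign_of_pos h, h.le]

private lemma csSup_mem_goodL {t0 t1 : ℝ} {f : ℝ → ℝ}
    (hf : ContinuousOn f (Set.Icc t0 t1))
    (hne : ({t | t ∈ Set.Icc t0 t1 ∧ ∀ s ∈ Set.Icc t0 t, 0 ≤ f s}).Nonempty) :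
    sSup {t | t ∈ Set.Icc t0 t1 ∧ ∀ s ∈ Set.Icc t0 t, 0 ≤ f s}
      ∈ {t | t ∈ Set.Icc t0 t1 ∧ ∀ s ∈ Set.Icc t0 t, 0 ≤ f s} := by
  set J := {t | t ∈ Set.Icc t0 t1 ∧ ∀ s ∈ Set.Icc t0 t, 0 ≤ f s} with hJ
  have hsub : J ⊆ Set.Icc t0 t1 := fun t ht => ht.1
  have hbdd : BddAbove J := BddAbove.mono hsub bddAbove_Icc
  obtain ⟨w, hw⟩ := hne
  have hwle : w ≤ sSup J := le_csSup hbdd hw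
  have hc0 : t0 ≤ sSup J := le_trans hw.1.1 hwle
  have hc1 : sSup J ≤ t1 := csSup_le ⟨w, hw⟩ (fun t ht => ht.1.2)
  have hlt : ∀ s, t0 ≤ s → s < sSup J → 0 ≤ f s := by
    intro s hs0 hs
    obtain ⟨t, htJ, hst⟩ := exists_lt_of_lt_csSup ⟨w, hw⟩ hs
    exact htJ.2 s ⟨hs0, hst.le⟩
  refine ⟨⟨hc0, hc1⟩, ?_⟩
  intro s hs
  rcases lt_or_eq_of_le hs.2 with h | h
  · exact hlt s hs.1 h
  · subst h
    rcases eq_or_lt_of_le hc0 with h0 | h0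
    · have : w = sSup J := le_antisymm hwle (h0 ▸ hw.1.1)
      rw [← this]
      exact hw.2 w ⟨hw.1.1, le_refl w⟩
    · have hsubIoo : Set.Ioo t0 (sSup J) ⊆ Set.Icc t0 t1 :=
        fun x hx => ⟨hx.1.le, hx.2.le.trans hc1⟩
      have hcw : Filter.Tendsto f (nhdsWithin (sSup J) (Set.Ioo t0 (sSup J))) (nhds (f (sSup J))) :=
        (hf.continuousWithinAt ⟨hc0, hc1⟩).mono hsubIoo
      have hnb : (nhdsWithin (sSup J) (Set.Ioo t0 (sSup J))).NeBot :=
        mem_closure_iff_nhdsWithin_neBot.mp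
          (by rw [closure_Ioo h0.ne]; exact ⟨hc0, le_refl _⟩)
      refine ge_of_tendsto hcw ?_
      exact eventually_mem_nhdsWithin.mono fun y hy => hlt y hy.1.le hy.2

private lemma csInf_mem_goodR {t0 t1 : ℝ} {f : ℝ → ℝ}
    (hf : ContinuousOn f (Set.Icc t0 t1))
    (hne : ({t | t ∈ Set.Icc t0 t1 ∧ ∀ s ∈ Set.Icc t t1, 0 ≤ f s}).Nonempty) :
    sInf {t | t ∈ Set.Icc t0 t1 ∧ ∀ s ∈ Set.Icc t t1, 0 ≤ f s}
      ∈ {t | t ∈ Set.Icc t0 t1 ∧ ∀ s ∈ Set.Icc t t1, 0 ≤ f s} := by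
  set J := {t | t ∈ Set.Icc t0 t1 ∧ ∀ s ∈ Set.Icc t t1, 0 ≤ f s} with hJ
  have hsub : J ⊆ Set.Icc t0 t1 := fun t ht => ht.1
  have hbdd : BddBelow J := BddBelow.mono hsub bddBelow_Icc
  obtain ⟨w, hw⟩ := hne
  have hwle : sInf J ≤ w := csInf_le hbdd hw
  have hc1 : sInf J ≤ t1 := le_trans hwle hw.1.2
  have hc0 : t0 ≤ sInf J := le_csInf ⟨w, hw⟩ (fun t ht => ht.1.1)
  have hlt : ∀ s, s ≤ t1 → sInf J < s → 0 ≤ f s := by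
    intro s hs1 hs
    obtain ⟨t, htJ, hst⟩ := exists_lt_of_csInf_lt ⟨w, hw⟩ hs
    exact htJ.2 s ⟨hst.le, hs1⟩
  refine ⟨⟨hc0, hc1⟩, ?_⟩
  intro s hs
  rcases lt_or_eq_of_le hs.1 with h | h
  · exact hlt s hs.2 h
  · rw [← h]
    rcases eq_or_lt_of_le hc1 with h1 | h1
    · have : w = sInf J := le_antisymm (h1 ▸ hw.1.2) hwle
      rw [← this]
      exact hw.2 w ⟨le_refl w, hw.1.2⟩
    · have hsubIoo : Set.Ioo (sInf J) t1 ⊆ Set.Icc t0 t1 :=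
        fun x hx => ⟨hc0.trans hx.1.le, hx.2.le⟩
      have hcw : Filter.Tendsto f (nhdsWithin (sInf J) (Set.Ioo (sInf J) t1)) (nhds (f (sInf J))) :=
        (hf.continuousWithinAt ⟨hc0, hc1⟩).mono hsubIoo
      have hnb : (nhdsWithin (sInf J) (Set.Ioo (sInf J) t1)).NeBot :=
        mem_closure_iff_nhdsWithin_neBot.mp
          (by rw [closure_Ioo h1.ne]; exact ⟨le_refl _, hc1⟩)
      refine ge_of_tendsto hcw ?_
      exact eventually_mem_nhdsWithin.mono fun y hy => hlt y hy.2.le hy.1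

private lemma phiA_pt_eq (φ : Bundle n → ℝ → ℝ) (b : Bundle n) (t : ℝ) :
    phiA φ (pt b) t = φ b t := by
  simp [phiA, pt, ite_mul, Finset.sum_ite_eq']

private lemma pt_stoch (b : Bundle n) : IsStoch (pt b) := by
  constructor
  · intro b'
    unfold pt
    positivity
  · simp [pt]

private lemma mix_stoch (b1 b2 : Bundle n) {l : ℝ} (h0 : 0 ≤ l) (h1 : l ≤ 1) :
    IsStoch (fun x => l * pt b1 x + (1 - l) * pt b2 x) := by
  constructor
  · intro x
    have e1 := (pt_stoch b1).1 x
    have e2 := (pt_stoch b2).1 x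
    have e3 : (0:ℝ) ≤ 1 - l := by linarith
    dsimp only
    have := mul_nonneg h0 e1
    have := mul_nonneg e3 e2
    linarith
  · rw [Finset.sum_add_distrib, ← Finset.mul_sum, ← Finset.mul_sum,
      (pt_stoch b1).2, (pt_stoch b2).2]
    ring

private lemma phiA_mix (φ : Bundle n → ℝ → ℝ) (b1 b2 : Bundle n) (l t : ℝ) :
    phiA φ (fun x => l * pt b1 x + (1 - l) * pt b2 x) t
      = l * φ b1 t + (1 - l) * φ b2 t := by
  have h1 := phiA_pt_eq φ b1 t
  have h2 := phiA_pt_eq φ b2 t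
  simp only [phiA] at h1 h2 ⊢
  rw [← h1, ← h2, Finset.mul_sum, Finset.mul_sum, ← Finset.sum_add_distrib]
  exact Finset.sum_congr rfl fun x _ => by ring

private lemma sc_split {t0 t1 tb : ℝ} {h : ℝ → ℝ}
    (hsc : SingleCrossingOn h (Set.Icc t0 t1)) (htb : tb ∈ Set.Icc t0 t1)
    (hpos : 0 ≤ h tb) :
    (∀ t ∈ Set.Icc t0 tb, 0 ≤ h t) ∨ (∀ t ∈ Set.Icc tb t1, 0 ≤ h t) := by
  rcases hsc with hm | hm
  · right
    intro t htmem
    have ht' : t ∈ Set.Icc t0 t1 := ⟨htb.1.trans htmem.1, htmem.2⟩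
    exact sign_nonneg_iff.mp ((sign_nonneg_iff.mpr hpos).trans (hm htb ht' htmem.1))
  · left
    intro t htmem
    have ht' : t ∈ Set.Icc t0 t1 := ⟨htmem.1, htmem.2.trans htb.2⟩
    exact sign_nonneg_iff.mp ((sign_nonneg_iff.mpr hpos).trans (hm ht' htb htmem.2))

/-- **Proposition 1.** Under Assumption SCD*, a bundle is a never strict best response
if and only if it is very weakly dominated. -/
theorem stmt2 {n : ℕ} (hn : 1 ≤ n) (t0 t1 : ℝ) (ht : t0 < t1)
    (φ : Bundle n → ℝ → ℝ)
    (hcont : ∀ b : Bundle n, ContinuousOn (φ b) (Set.Icc t0 t1))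
    (hdist : Distinct φ t0 t1)
    (hscd : SCDstar φ t0 t1)
    (b : Bundle n) :
    NeverStrictBR φ t0 t1 b ↔ VWD φ t0 t1 (pt b) := by
  classical
  constructor
  · intro hns
    -- key step: a mixture of two pure bundles dominating b on two overlapping intervals
    have key : ∀ tb ∈ Set.Icc t0 t1, ∀ b1 b2 : Bundle n, b1 ≠ b → b2 ≠ b →
        (∀ t ∈ Set.Icc t0 tb, φ b t ≤ φ b1 t) →
        (∀ t ∈ Set.Icc tb t1, φ b t ≤ φ b2 t) →
        VWD φ t0 t1 (pt b) := by
      intro tb htb b1 b2 hb1 hb2 h1 h2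
      set S1 : Set ℝ := {l | ∀ t ∈ Set.Icc t0 tb, φ b t ≤ l * φ b1 t + (1 - l) * φ b2 t}
        with hS1def
      set S2 : Set ℝ := {l | ∀ t ∈ Set.Icc tb t1, φ b t ≤ l * φ b1 t + (1 - l) * φ b2 t}
        with hS2def
      have hcl1 : IsClosed S1 := by
        have : S1 = ⋂ t ∈ Set.Icc t0 tb,
            {l : ℝ | φ b t ≤ l * φ b1 t + (1 - l) * φ b2 t} := by
          ext l
          simp [hS1def, Set.mem_iInter]
        rw [this]
        exact isClosed_biInter fun t _ =>
          isClosed_le continuous_const (by continuity)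
      have hcl2 : IsClosed S2 := by
        have : S2 = ⋂ t ∈ Set.Icc tb t1,
            {l : ℝ | φ b t ≤ l * φ b1 t + (1 - l) * φ b2 t} := by
          ext l
          simp [hS2def, Set.mem_iInter]
        rw [this]
        exact isClosed_biInter fun t _ =>
          isClosed_le continuous_const (by continuity)
      have hcover : Set.Icc (0:ℝ) 1 ⊆ S1 ∪ S2 := by
        intro l hl
        have hsc : SingleCrossingOn
            (fun t => (l * φ b1 t + (1 - l) * φ b2 t) - φ b t) (Set.Icc t0 t1) := by
          have h := hscd (fun x => l * pt b1 x + (1 - l) * pt b2 x) (pt b)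
            (mix_stoch b1 b2 hl.1 hl.2) (pt_stoch b)
          have he : (fun t => phiA φ (fun x => l * pt b1 x + (1 - l) * pt b2 x) t
              - phiA φ (pt b) t)
              = fun t => (l * φ b1 t + (1 - l) * φ b2 t) - φ b t := by
            funext t
            rw [phiA_mix, phiA_pt_eq]
          rwa [he] at h
        have hpos : 0 ≤ (l * φ b1 tb + (1 - l) * φ b2 tb) - φ b tb := by
          have e1 := h1 tb ⟨htb.1, le_refl tb⟩
          have e2 := h2 tb ⟨le_refl tb, htb.2⟩
          nlinarith [hl.1, hl.2]
        rcases sc_split hsc htb hpos with h | h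
        · left
          intro t htm
          linarith [h t htm]
        · right
          intro t htm
          linarith [h t htm]
      have h1S : (Set.Icc (0:ℝ) 1 ∩ S1).Nonempty := by
        refine ⟨1, ⟨zero_le_one, le_refl 1⟩, ?_⟩
        intro t htm
        have := h1 t htm
        linarith
      have h2S : (Set.Icc (0:ℝ) 1 ∩ S2).Nonempty := by
        refine ⟨0, ⟨le_refl 0, zero_le_one⟩, ?_⟩
        intro t htm
        have := h2 t htm
        linarith
      obtain ⟨l, hl01, hl1, hl2⟩ :=
        isPreconnected_closed_iff.mp isPreconnected_Icc S1 S2 hcl1 hcl2 hcover h1S h2S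
      refine ⟨fun x => l * pt b1 x + (1 - l) * pt b2 x,
        mix_stoch b1 b2 hl01.1 hl01.2, ?_, ?_⟩
      · intro heq
        have hb1' : b ≠ b1 := Ne.symm hb1
        have hb2' : b ≠ b2 := Ne.symm hb2
        have h := congrFun heq b
        simp [pt, hb1', hb2'] at h
      · intro t htm
        rw [phiA_pt_eq, phiA_mix]
        rcases le_total t tb with h | h
        · exact hl1 t ⟨htm.1, h⟩
        · exact hl2 t ⟨h, htm.2⟩
    -- single crossing for pure differences
    have hscpure : ∀ b' : Bundle n,
        SingleCrossingOn (fun t => φ b' t - φ b t) (Set.Icc t0 t1) := by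
      intro b'
      have h := hscd (pt b') (pt b) (pt_stoch b') (pt_stoch b)
      have he : (fun t => phiA φ (pt b') t - phiA φ (pt b) t)
          = fun t => φ b' t - φ b t := by
        funext t
        rw [phiA_pt_eq, phiA_pt_eq]
      rwa [he] at h
    have hgc : ∀ b' : Bundle n, ContinuousOn (fun t => φ b' t - φ b t) (Set.Icc t0 t1) :=
      fun b' => (hcont b').sub (hcont b)
    set J : Bundle n → Set ℝ := fun b' =>
      {t | t ∈ Set.Icc t0 t1 ∧ ∀ s ∈ Set.Icc t0 t, 0 ≤ φ b' s - φ b s} with hJdef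
    set K : Bundle n → Set ℝ := fun b' =>
      {t | t ∈ Set.Icc t0 t1 ∧ ∀ s ∈ Set.Icc t t1, 0 ≤ φ b' s - φ b s} with hKdef
    have ht0T : t0 ∈ Set.Icc t0 t1 := ⟨le_refl t0, ht.le⟩
    have ht1T : t1 ∈ Set.Icc t0 t1 := ⟨ht.le, le_refl t1⟩
    obtain ⟨ba, hba, hba0⟩ := hns t0 ht0T
    obtain ⟨bb, hbb, hbb1⟩ := hns t1 ht1T
    have hJa : t0 ∈ J ba := by
      refine ⟨ht0T, fun s hs => ?_⟩
      have hseq : s = t0 := le_antisymm hs.2 hs.1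
      rw [hseq]
      linarith
    have hKb : t1 ∈ K bb := by
      refine ⟨ht1T, fun s hs => ?_⟩
      have hseq : s = t1 := le_antisymm hs.2 hs.1
      rw [hseq]
      linarith
    set F1 : Finset (Bundle n) := Finset.univ.filter (fun b' => b' ≠ b ∧ (J b').Nonempty)
      with hF1def
    set F2 : Finset (Bundle n) := Finset.univ.filter (fun b' => b' ≠ b ∧ (K b').Nonempty)
      with hF2def
    have hF1ne : F1.Nonempty := ⟨ba, by
      rw [hF1def, Finset.mem_filter]
      exact ⟨Finset.mem_univ ba, hba, ⟨t0, hJa⟩⟩⟩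
    have hF2ne : F2.Nonempty := ⟨bb, by
      rw [hF2def, Finset.mem_filter]
      exact ⟨Finset.mem_univ bb, hbb, ⟨t1, hKb⟩⟩⟩
    obtain ⟨b1, hb1F, hb1e⟩ := Finset.exists_mem_eq_sup' hF1ne (fun b' => sSup (J b'))
    obtain ⟨b2, hb2F, hb2e⟩ := Finset.exists_mem_eq_inf' hF2ne (fun b' => sInf (K b'))
    have hb1prop : b1 ≠ b ∧ (J b1).Nonempty := (Finset.mem_filter.mp hb1F).2
    have hb2prop : b2 ≠ b ∧ (K b2).Nonempty := (Finset.mem_filter.mp hb2F).2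
    have hcmem : sSup (J b1) ∈ J b1 := csSup_mem_goodL (hgc b1) hb1prop.2
    have hdmem : sInf (K b2) ∈ K b2 := csInf_mem_goodR (hgc b2) hb2prop.2
    -- d* ≤ c*
    have hdc : sInf (K b2) ≤ sSup (J b1) := by
      by_contra hlt
      push_neg at hlt
      obtain ⟨tm, htm1, htm2⟩ := exists_between hlt
      have htmT : tm ∈ Set.Icc t0 t1 := ⟨hcmem.1.1.trans htm1.le, htm2.le.trans hdmem.1.2⟩
      obtain ⟨b', hb', hb'pos⟩ := hns tm htmT
      rcases sc_split (hscpure b') htmT (by linarith) with h | h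
      · have htmJ : tm ∈ J b' := ⟨htmT, h⟩
        have hb'F1 : b' ∈ F1 := by
          rw [hF1def, Finset.mem_filter]
          exact ⟨Finset.mem_univ b', hb', ⟨tm, htmJ⟩⟩
        have hle1 : tm ≤ sSup (J b') :=
          le_csSup (BddAbove.mono (fun x hx => hx.1) bddAbove_Icc) htmJ
        have hle2 : sSup (J b') ≤ F1.sup' hF1ne (fun b' => sSup (J b')) :=
          Finset.le_sup' (fun b' => sSup (J b')) hb'F1
        rw [← hb1e] at htm1
        linarith
      · have htmK : tm ∈ K b' := ⟨htmT, h⟩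
        have hb'F2 : b' ∈ F2 := by
          rw [hF2def, Finset.mem_filter]
          exact ⟨Finset.mem_univ b', hb', ⟨tm, htmK⟩⟩
        have hle1 : sInf (K b') ≤ tm :=
          csInf_le (BddBelow.mono (fun x hx => hx.1) bddBelow_Icc) htmK
        have hle2 : F2.inf' hF2ne (fun b' => sInf (K b')) ≤ sInf (K b') :=
          Finset.inf'_le (fun b' => sInf (K b')) hb'F2
        rw [← hb2e] at htm2
        linarith
    -- conclude via key, with tb = sSup (J b1)
    refine key (sSup (J b1)) hcmem.1 b1 b2 hb1prop.1 hb2prop.1 ?_ ?_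
    · intro t htm
      have := hcmem.2 t htm
      linarith
    · intro t htm
      have := hdmem.2 t ⟨hdc.trans htm.1, htm.2⟩
      linarith
  · rintro ⟨a', ⟨hpos, hsum⟩, hne, hdom⟩ t htm
    by_contra hcon
    push_neg at hcon
    have hsplit : a' b + ∑ x ∈ Finset.univ.erase b, a' x = 1 := by
      rw [Finset.add_sum_erase Finset.univ a' (Finset.mem_univ b)]
      exact hsum
    have hble : a' b ≤ 1 := by
      have : ∀ x ∈ Finset.univ.erase b, 0 ≤ a' x := fun x _ => hpos x
      have := Finset.sum_nonneg this
      linarith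
    have hblt : a' b < 1 := by
      rcases lt_or_eq_of_le hble with h | h
      · exact h
      · exfalso
        apply hne
        funext x
        by_cases hx : x = b
        · rw [hx, h]
          simp [pt]
        · have hzero : ∑ x ∈ Finset.univ.erase b, a' x = 0 := by linarith
          have := (Finset.sum_eq_zero_iff_of_nonneg (fun x _ => hpos x)).mp hzero x
            (Finset.mem_erase.mpr ⟨hx, Finset.mem_univ x⟩)
          rw [this]
          simp [pt, hx]
    obtain ⟨b0, hb0mem, hb0pos⟩ : ∃ b0 ∈ Finset.univ.erase b, 0 < a' b0 := by
      by_contra hall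
      push_neg at hall
      have hzero : ∑ x ∈ Finset.univ.erase b, a' x = 0 :=
        Finset.sum_eq_zero fun x hx => le_antisymm (hall x hx) (hpos x)
      linarith
    have hb0ne : b0 ≠ b := (Finset.mem_erase.mp hb0mem).1
    have hstrict : phiA φ a' t < φ b t := by
      have hlt : ∑ x, a' x * φ x t < ∑ x, a' x * φ b t := by
        apply Finset.sum_lt_sum
        · intro x _
          by_cases hx : x = b
          · rw [hx]
          · exact mul_le_mul_of_nonneg_left (hcon x hx).le (hpos x)
        · exact ⟨b0, Finset.mem_univ b0,
            mul_lt_mul_of_pos_left (hcon b0 hb0ne) hb0pos⟩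
      calc phiA φ a' t < ∑ x, a' x * φ b t := hlt
        _ = (∑ x, a' x) * φ b t := by rw [Finset.sum_mul]
        _ = φ b t := by rw [hsum, one_mul]
    have := hdom t htm
    rw [phiA_pt_eq] at this
    linarith



end Paper
end

section
/- Assume MD and SCD*, and assume the virtual values are additive: φ(∅,t) = 0 for all t ∈ T and φ(b,t) = Σ_{i∈b} φ({i},t) for every nonempty bundle b and all t ∈ T. Assume φ({i},t0) < 0 < φ({i},t1) for every good i, and suppose the singleton ratios are strictly ordered: there is an enumeration j_1,…,j_n of {1,…,n} with φ({j_1},t1)/φ({j_1},t0) < φ({j_2},t1)/φ({j_2},t0) < ⋯ < φ({j_n},t1)/φ({j_n},t0). Then the minimal optimal menu is the nested menu {∅, {j_1}, {j_1,j_2}, …, {j_1,…,j_{n−1}}, {j_1,…,j_n}}. -/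
namespace Paper

variable {n : ℕ}

lemma sign_one_pos {x : ℝ} (h : Real.sign x = 1) : 0 < x := by
  rcases lt_trichotomy x 0 with h' | h' | h'
  · rw [Real.sign_of_neg h'] at h; norm_num at h
  · rw [h', Real.sign_zero] at h; norm_num at h
  · exact h'

lemma pos_on_Icc {n : ℕ} {φ : Bundle n → ℝ → ℝ} {t0 t1 : ℝ} (ht : t0 ≤ t1)
    (hscd : SCDstar φ t0 t1) (hadd0 : ∀ t ∈ Set.Icc t0 t1, φ (∅ : Bundle n) t = 0)
    (i j : Fin n) {α β : ℝ} (hα0 : 0 ≤ α) (hα1 : α ≤ 1) (hβ0 : 0 ≤ β) (hβ1 : β ≤ 1)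
    (h0 : 0 < α * φ {i} t0 - β * φ {j} t0)
    (h1 : 0 < α * φ {i} t1 - β * φ {j} t1) :
    ∀ t ∈ Set.Icc t0 t1, 0 < α * φ {i} t - β * φ {j} t := by
  set a : Bundle n → ℝ := fun b => α * pt {i} b + (1 - α) * pt (∅ : Bundle n) b with ha
  set a' : Bundle n → ℝ := fun b => β * pt {j} b + (1 - β) * pt (∅ : Bundle n) b with ha'
  have hine : ({i} : Bundle n) ≠ ∅ := by simp
  have hjne : ({j} : Bundle n) ≠ ∅ := by simp
  have hia : IsStoch a := by
    constructor
    · intro b; simp only [ha, pt]; split_ifs <;> nlinarith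
    · simp [ha, pt, Finset.sum_add_distrib, Finset.sum_ite_eq', mul_ite, hine]
  have hia' : IsStoch a' := by
    constructor
    · intro b; simp only [ha', pt]; split_ifs <;> nlinarith
    · simp [ha', pt, Finset.sum_add_distrib, Finset.sum_ite_eq', mul_ite, hjne]
  have hpa : ∀ t, phiA φ a t = α * φ {i} t + (1 - α) * φ (∅ : Bundle n) t := by
    intro t
    simp [ha, phiA, pt, add_mul, ite_mul, mul_ite, Finset.sum_add_distrib,
      Finset.sum_ite_eq', mul_zero, zero_mul, mul_assoc]
  have hpa' : ∀ t, phiA φ a' t = β * φ {j} t + (1 - β) * φ (∅ : Bundle n) t := by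
    intro t
    simp [ha', phiA, pt, add_mul, ite_mul, mul_ite, Finset.sum_add_distrib,
      Finset.sum_ite_eq', mul_zero, zero_mul, mul_assoc]
  have hdiff : ∀ t ∈ Set.Icc t0 t1,
      phiA φ a t - phiA φ a' t = α * φ {i} t - β * φ {j} t := by
    intro t htm; rw [hpa, hpa', hadd0 t htm]; ring
  have ht0m : t0 ∈ Set.Icc t0 t1 := ⟨le_refl _, ht⟩
  have ht1m : t1 ∈ Set.Icc t0 t1 := ⟨ht, le_refl _⟩
  have hs0 : Real.sign (phiA φ a t0 - phiA φ a' t0) = 1 := by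
    rw [hdiff t0 ht0m]; exact Real.sign_of_pos h0
  have hs1 : Real.sign (phiA φ a t1 - phiA φ a' t1) = 1 := by
    rw [hdiff t1 ht1m]; exact Real.sign_of_pos h1
  intro t htm
  have key : Real.sign (phiA φ a t - phiA φ a' t) = 1 := by
    rcases hscd a a' hia hia' with h | h
    · have l1 := h htm ht1m htm.2
      have l2 := h ht0m htm htm.1
      simp only at l1 l2
      rw [hs0] at l2; rw [hs1] at l1; linarith
    · have l1 := h htm ht1m htm.2
      have l2 := h ht0m htm htm.1
      simp only at l1 l2
      rw [hs0] at l2; rw [hs1] at l1; linarith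
  rw [hdiff t htm] at key
  exact sign_one_pos key

lemma order_lemma {n : ℕ} {φ : Bundle n → ℝ → ℝ} {t0 t1 : ℝ} (ht : t0 ≤ t1)
    (hscd : SCDstar φ t0 t1) (hadd0 : ∀ t ∈ Set.Icc t0 t1, φ (∅ : Bundle n) t = 0)
    (i j : Fin n)
    (hAi : φ {i} t0 < 0) (hBi : 0 < φ {i} t1) (hCj : φ {j} t0 < 0) (hDj : 0 < φ {j} t1)
    (hr : φ {i} t1 / φ {i} t0 < φ {j} t1 / φ {j} t0) :
    ∃ α β : ℝ, 0 < α ∧ 0 < β ∧ ∀ t ∈ Set.Icc t0 t1, β * φ {j} t < α * φ {i} t := by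
  set A := φ {i} t0 with hA
  set B := φ {i} t1 with hB
  set C := φ {j} t0 with hC
  set D := φ {j} t1 with hD
  have hA0 : A ≠ 0 := ne_of_lt hAi
  have hC0 : C ≠ 0 := ne_of_lt hCj
  have hkey : C * B < A * D := by
    have hAC : 0 < A * C := mul_pos_of_neg_of_neg hAi hCj
    have h2 := mul_lt_mul_of_pos_left hr hAC
    have e1 : (A * C) * (B / A) = C * B := by field_simp
    have e2 : (A * C) * (D / C) = A * D := by field_simp
    rw [e1, e2] at h2; exact h2
  have hDB : D / B < C / A := by
    have hq : C / A - D / B = (C * B - A * D) / (A * B) := by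
      field_simp
    have hABneg : A * B < 0 := mul_neg_of_neg_of_pos hAi hBi
    have hpos : 0 < C / A - D / B := by
      rw [hq]; exact div_pos_of_neg_of_neg (by linarith) hABneg
    linarith
  set r : ℝ := (D / B + C / A) / 2 with hrdef
  have hDBpos : 0 < D / B := div_pos hDj hBi
  have h1 : D / B < r := by rw [hrdef]; linarith
  have h2 : r < C / A := by rw [hrdef]; linarith
  have hrpos : 0 < r := lt_trans hDBpos h1
  have hr1 : (0:ℝ) < r + 1 := by linarith
  have hrA : C < r * A := (lt_div_iff_of_neg hAi).mp h2
  have hrB : D < r * B := (div_lt_iff₀ hBi).mp h1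
  have hh0 : 0 < r / (r + 1) * A - 1 / (r + 1) * C := by
    have : r / (r + 1) * A - 1 / (r + 1) * C = (r * A - C) / (r + 1) := by
      field_simp
    rw [this]; exact div_pos (by linarith) hr1
  have hh1 : 0 < r / (r + 1) * B - 1 / (r + 1) * D := by
    have : r / (r + 1) * B - 1 / (r + 1) * D = (r * B - D) / (r + 1) := by
      field_simp
    rw [this]; exact div_pos (by linarith) hr1
  have hab := pos_on_Icc ht hscd hadd0 i j
    (le_of_lt (div_pos hrpos hr1)) ((div_le_one hr1).mpr (by linarith))
    (le_of_lt (div_pos one_pos hr1)) ((div_le_one hr1).mpr (by linarith)) hh0 hh1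
  exact ⟨r / (r + 1), 1 / (r + 1), div_pos hrpos hr1, div_pos one_pos hr1,
    fun t htm => by linarith [hab t htm]⟩

/-- **Theorem 4 (additive values).** Under MD and SCD*, with additive virtual values,
boundary signs φ({i},t0) < 0 < φ({i},t1), and strictly ordered singleton ratios along
the enumeration e, the minimal optimal menu is the nested menu of prefix unions
{∅, {e 0}, {e 0, e 1}, …, {e 0, …, e (n-1)}}. -/
theorem stmt8 {n : ℕ} (hn : 1 ≤ n) (t0 t1 : ℝ) (ht : t0 < t1)
    (φ : Bundle n → ℝ → ℝ)
    (hcont : ∀ b : Bundle n, ContinuousOn (φ b) (Set.Icc t0 t1))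
    (hdist : Distinct φ t0 t1)
    (hmd : MD φ t0 t1)
    (hscd : SCDstar φ t0 t1)
    (hadd0 : ∀ t ∈ Set.Icc t0 t1, φ (∅ : Bundle n) t = 0)
    (hadd : ∀ b : Bundle n, b ≠ ∅ → ∀ t ∈ Set.Icc t0 t1, φ b t = ∑ i ∈ b, φ {i} t)
    (hbdry : ∀ i : Fin n, φ {i} t0 < 0 ∧ 0 < φ {i} t1)
    (e : Fin n → Fin n) (he : Function.Bijective e)
    (hratio : ∀ k l : Fin n, k < l →
      φ {e k} t1 / φ {e k} t0 < φ {e l} t1 / φ {e l} t0) :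
    MinimalOptimalMenu φ t0 t1
      ((Finset.range (n + 1)).image fun k =>
        (Finset.filter (fun l : Fin n => (l : ℕ) < k) Finset.univ).image e) := by
  have hticc : t0 ∈ Set.Icc t0 t1 := ⟨le_refl _, ht.le⟩
  have ht1cc : t1 ∈ Set.Icc t0 t1 := ⟨ht.le, le_refl _⟩
  set E : Fin n ≃ Fin n := Equiv.ofBijective e he with hEdef
  have hEe : ∀ i : Fin n, e (E.symm i) = i := fun i => E.apply_symm_apply i
  have hEs : ∀ l : Fin n, E.symm (e l) = l := fun l => E.symm_apply_apply l
  have horder : ∀ k l : Fin n, k < l → ∃ α β : ℝ, 0 < α ∧ 0 < β ∧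
      ∀ t ∈ Set.Icc t0 t1, β * φ {e l} t < α * φ {e k} t := fun k l hkl =>
    order_lemma ht.le hscd hadd0 (e k) (e l) (hbdry (e k)).1 (hbdry (e k)).2
      (hbdry (e l)).1 (hbdry (e l)).2 (hratio k l hkl)
  have hdown : ∀ t ∈ Set.Icc t0 t1, ∀ k l : Fin n, k < l →
      0 ≤ φ {e l} t → 0 < φ {e k} t := by
    intro t htm k l hkl hp
    obtain ⟨α, β, hα, hβ, h⟩ := horder k l hkl
    have := h t htm
    nlinarith
  have hup : ∀ t ∈ Set.Icc t0 t1, ∀ k l : Fin n, k < l →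
      φ {e k} t ≤ 0 → φ {e l} t < 0 := by
    intro t htm k l hkl hp
    obtain ⟨α, β, hα, hβ, h⟩ := horder k l hkl
    have := h t htm
    nlinarith
  have hval : ∀ t ∈ Set.Icc t0 t1, ∀ b : Bundle n, φ b t = ∑ i ∈ b, φ {i} t := by
    intro t htm b
    by_cases hb : b = ∅
    · subst hb; simp [hadd0 t htm]
    · exact hadd b hb t htm
  set P : ℕ → Bundle n := fun m =>
    (Finset.filter (fun l : Fin n => (l : ℕ) < m) Finset.univ).image e with hP
  have hPmem : ∀ (m : ℕ) (i : Fin n), i ∈ P m ↔ ((E.symm i : Fin n) : ℕ) < m := by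
    intro m i
    simp only [hP, Finset.mem_image, Finset.mem_filter, Finset.mem_univ, true_and]
    constructor
    · rintro ⟨l, hl, rfl⟩
      rwa [hEs l]
    · intro hi
      exact ⟨E.symm i, hi, hEe i⟩
  have hmaxle : ∀ t ∈ Set.Icc t0 t1, ∀ m : ℕ,
      (∀ i : Fin n, i ∈ P m → 0 < φ {i} t) →
      (∀ i : Fin n, i ∉ P m → φ {i} t ≤ 0) →
      ∀ b : Bundle n, φ b t ≤ φ (P m) t := by
    intro t htm m hpos hneg b
    rw [hval t htm b, hval t htm (P m)]
    have hid := Finset.sum_inter_add_sum_sdiff b (P m) (fun i => φ {i} t)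
    have hd : ∑ i ∈ b \ P m, φ {i} t ≤ 0 :=
      Finset.sum_nonpos fun i hi => hneg i (Finset.mem_sdiff.mp hi).2
    have hsub : ∑ i ∈ b ∩ P m, φ {i} t ≤ ∑ i ∈ P m, φ {i} t :=
      Finset.sum_le_sum_of_subset_of_nonneg Finset.inter_subset_right
        (fun i hiQ _ => (hpos i hiQ).le)
    linarith
  have hmaxlt : ∀ t ∈ Set.Icc t0 t1, ∀ m : ℕ,
      (∀ i : Fin n, i ∈ P m → 0 < φ {i} t) →
      (∀ i : Fin n, i ∉ P m → φ {i} t < 0) →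
      ∀ b : Bundle n, b ≠ P m → φ b t < φ (P m) t := by
    intro t htm m hpos hneg b hbne
    rw [hval t htm b, hval t htm (P m)]
    have hid := Finset.sum_inter_add_sum_sdiff b (P m) (fun i => φ {i} t)
    by_cases hbd : (b \ P m).Nonempty
    · have hd : ∑ i ∈ b \ P m, φ {i} t < 0 := by
        have h := Finset.sum_pos (s := b \ P m) (f := fun i => -φ {i} t)
          (fun i hi => neg_pos.mpr (hneg i (Finset.mem_sdiff.mp hi).2)) hbd
        rw [Finset.sum_neg_distrib] at h
        linarith
      have hsub : ∑ i ∈ b ∩ P m, φ {i} t ≤ ∑ i ∈ P m, φ {i} t :=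
        Finset.sum_le_sum_of_subset_of_nonneg Finset.inter_subset_right
          (fun i hiQ _ => (hpos i hiQ).le)
      linarith
    · have hbsub : b ⊆ P m := by
        rw [Finset.not_nonempty_iff_eq_empty, Finset.sdiff_eq_empty_iff_subset] at hbd
        exact hbd
      have hss : b ⊂ P m := hbsub.ssubset_of_ne hbne
      obtain ⟨i0, hi0P, hi0b⟩ := Finset.exists_of_ssubset hss
      have hid2 := Finset.sum_inter_add_sum_sdiff (P m) b (fun i => φ {i} t)
      have hbi : P m ∩ b = b := Finset.inter_eq_right.mpr hbsub
      have hd : 0 < ∑ i ∈ P m \ b, φ {i} t :=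
        Finset.sum_pos (fun i hi => hpos i (Finset.mem_sdiff.mp hi).1)
          ⟨i0, Finset.mem_sdiff.mpr ⟨hi0P, hi0b⟩⟩
      rw [hbi] at hid2
      linarith
  have hcard : ∀ K : Finset (Fin n), (∀ k l : Fin n, k ≤ l → l ∈ K → k ∈ K) →
      ∀ l : Fin n, l ∈ K ↔ (l : ℕ) < K.card := by
    intro K hdc l
    constructor
    · intro hl
      have hsub : Finset.Iic l ⊆ K := fun k hk => hdc k l (Finset.mem_Iic.mp hk) hl
      have := Finset.card_le_card hsub
      rw [Fin.card_Iic] at this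
      omega
    · intro hl
      by_contra hlK
      have hsub : K ⊆ Finset.Iio l := by
        intro k hk
        rw [Finset.mem_Iio]
        by_contra hkl
        exact hlK (hdc l k (le_of_not_gt hkl) hk)
      have := Finset.card_le_card hsub
      rw [Fin.card_Iio] at this
      omega
  have hopt : OptimalMenu φ t0 t1 ((Finset.range (n + 1)).image P) := by
    intro t htm
    set K : Finset (Fin n) := Finset.filter (fun l : Fin n => 0 < φ {e l} t)
      Finset.univ with hK
    have hdc : ∀ k l : Fin n, k ≤ l → l ∈ K → k ∈ K := by
      intro k l hkl hlK
      rcases eq_or_lt_of_le hkl with rfl | hkl'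
      · exact hlK
      · simp only [hK, Finset.mem_filter, Finset.mem_univ, true_and] at hlK ⊢
        exact hdown t htm k l hkl' hlK.le
    have hKiff := hcard K hdc
    have hmn : K.card ≤ n := by
      have := Finset.card_le_univ K
      simpa using this
    refine ⟨P K.card, Finset.mem_image.mpr ⟨K.card, Finset.mem_range.mpr (by omega), rfl⟩, ?_⟩
    intro b'
    refine hmaxle t htm K.card ?_ ?_ b'
    · intro i hi
      rw [hPmem K.card i] at hi
      have h2 : E.symm i ∈ K := (hKiff (E.symm i)).mpr hi
      simp only [hK, Finset.mem_filter, Finset.mem_univ, true_and] at h2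
      rwa [hEe i] at h2
    · intro i hi
      rw [hPmem K.card i] at hi
      have h2 : E.symm i ∉ K := fun h => hi ((hKiff _).mp h)
      simp only [hK, Finset.mem_filter, Finset.mem_univ, true_and, not_lt] at h2
      rwa [hEe i] at h2
  have hwit' : ∀ m : ℕ, 0 < m → m < n → ∃ t ∈ Set.Icc t0 t1,
      (∀ l : Fin n, (l : ℕ) < m → 0 < φ {e l} t) ∧
      (∀ l : Fin n, m ≤ (l : ℕ) → φ {e l} t < 0) := by
    intro m hm0 hmn
    set kf : Fin n := ⟨m - 1, by omega⟩ with hkf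
    set kg : Fin n := ⟨m, by omega⟩ with hkg
    have hkfg : kf < kg := by rw [Fin.lt_def]; simp [hkf, hkg]; omega
    obtain ⟨α, β, hα, hβ, hαβ⟩ := horder kf kg hkfg
    have hfmono : MonotoneOn (fun t => φ {e kf} t) (Set.Icc t0 t1) := by
      rcases hmd {e kf} ∅ with hmon | hant
      · intro x hx y hy hxy
        have h2 := hmon hx hy hxy
        simp only [hadd0 x hx, hadd0 y hy, sub_zero] at h2
        exact h2
      · exfalso
        have h2 := hant hticc ht1cc ht.le
        simp only [hadd0 t0 hticc, hadd0 t1 ht1cc, sub_zero] at h2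
        have h3 := (hbdry (e kf)).1
        have h4 := (hbdry (e kf)).2
        linarith
    set f : ℝ → ℝ := fun t => φ {e kf} t with hf
    set g : ℝ → ℝ := fun t => φ {e kg} t with hg
    have hZfc : IsClosed (Set.Icc t0 t1 ∩ f ⁻¹' Set.Iic 0) :=
      (hcont {e kf}).preimage_isClosed_of_isClosed isClosed_Icc isClosed_Iic
    have hZgc : IsClosed (Set.Icc t0 t1 ∩ g ⁻¹' Set.Ici 0) :=
      (hcont {e kg}).preimage_isClosed_of_isClosed isClosed_Icc isClosed_Ici
    set Zf := Set.Icc t0 t1 ∩ f ⁻¹' Set.Iic 0 with hZf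
    set Zg := Set.Icc t0 t1 ∩ g ⁻¹' Set.Ici 0 with hZg
    have hfZ : t0 ∈ Zf := ⟨hticc, le_of_lt (hbdry (e kf)).1⟩
    have hgZ : t1 ∈ Zg := ⟨ht1cc, le_of_lt (hbdry (e kg)).2⟩
    have hbddf : BddAbove Zf := BddAbove.mono Set.inter_subset_left bddAbove_Icc
    have hbddg : BddBelow Zg := BddBelow.mono Set.inter_subset_left bddBelow_Icc
    set bS := sSup Zf with hbS
    set aS := sInf Zg with haS
    have hbmem : bS ∈ Zf := hZfc.csSup_mem ⟨t0, hfZ⟩ hbddf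
    have hamem : aS ∈ Zg := hZgc.csInf_mem ⟨t1, hgZ⟩ hbddg
    have hba : bS < aS := by
      by_contra hcon
      push_neg at hcon
      have h1 : 0 < α * f aS := by
        have h2 := hαβ aS hamem.1
        have hg0 : (0:ℝ) ≤ g aS := hamem.2
        nlinarith
      have hfa : 0 < f aS := by nlinarith
      have hmono2 := hfmono hamem.1 hbmem.1 hcon
      have h3 : f bS ≤ 0 := hbmem.2
      simp only [hf] at hmono2
      linarith
    set tm := (bS + aS) / 2 with htmdef
    have ht0b : t0 ≤ bS := le_csSup hbddf hfZ
    have hat1 : aS ≤ t1 := hamem.1.2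
    have htmI : tm ∈ Set.Icc t0 t1 := ⟨by rw [htmdef]; linarith, by rw [htmdef]; linarith⟩
    have hftm : 0 < f tm := by
      by_contra hcon
      push_neg at hcon
      have h2 : tm ∈ Zf := ⟨htmI, hcon⟩
      have h3 := le_csSup hbddf h2
      rw [htmdef] at h3
      linarith
    have hgtm : g tm < 0 := by
      by_contra hcon
      push_neg at hcon
      have h2 : tm ∈ Zg := ⟨htmI, hcon⟩
      have h3 := csInf_le hbddg h2
      rw [htmdef] at h3
      linarith
    refine ⟨tm, htmI, ?_, ?_⟩
    · intro l hl
      have hlkf : l ≤ kf := by rw [Fin.le_def]; simp [hkf]; omega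
      rcases eq_or_lt_of_le hlkf with rfl | hlt
      · exact hftm
      · exact hdown tm htmI l kf hlt hftm.le
    · intro l hl
      have hkgl : kg ≤ l := by rw [Fin.le_def]; simp [hkg]; omega
      rcases eq_or_lt_of_le hkgl with rfl | hlt
      · exact hgtm
      · exact hup tm htmI kg l hlt hgtm.le
  have hwit : ∀ m : ℕ, m ≤ n → ∃ t ∈ Set.Icc t0 t1,
      (∀ i : Fin n, i ∈ P m → 0 < φ {i} t) ∧
      (∀ i : Fin n, i ∉ P m → φ {i} t < 0) := by
    intro m hmn
    have key : ∃ t ∈ Set.Icc t0 t1,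
        (∀ l : Fin n, (l : ℕ) < m → 0 < φ {e l} t) ∧
        (∀ l : Fin n, m ≤ (l : ℕ) → φ {e l} t < 0) := by
      rcases Nat.eq_zero_or_pos m with rfl | hm0
      · exact ⟨t0, hticc, fun l hl => by omega, fun l _ => (hbdry (e l)).1⟩
      · rcases eq_or_lt_of_le hmn with rfl | hmlt
        · exact ⟨t1, ht1cc, fun l _ => (hbdry (e l)).2, fun l hl => by
            have := l.isLt; omega⟩
        · exact hwit' m hm0 hmlt
    obtain ⟨t, htm, h1, h2⟩ := key
    refine ⟨t, htm, ?_, ?_⟩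
    · intro i hi
      rw [hPmem m i] at hi
      have := h1 (E.symm i) hi
      rwa [hEe i] at this
    · intro i hi
      rw [hPmem m i] at hi
      have := h2 (E.symm i) (by omega)
      rwa [hEe i] at this
  refine ⟨hopt, ?_⟩
  intro S' hS' hS'opt
  obtain ⟨x, hxmenu, hxS'⟩ := Finset.exists_of_ssubset hS'
  obtain ⟨m, hmR, hxm⟩ := Finset.mem_image.mp hxmenu
  have hmn : m ≤ n := by
    have := Finset.mem_range.mp hmR
    omega
  obtain ⟨t, htm, h1, h2⟩ := hwit m hmn
  obtain ⟨b, hbS', hbmax⟩ := hS'opt t htm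
  have hbne : b ≠ P m := by
    intro hbeq
    rw [hbeq, hxm] at hbS'
    exact hxS' hbS'
  have hlt := hmaxlt t htm m h1 h2 b hbne
  have hle := hbmax (P m)
  linarith

end Paper
end

section
/- Assume MD, SCD*, and the boundary assumptions. Suppose φ(b*,t1) > φ(b,t1) for every bundle b ≠ b* (the grand bundle is the uniquely most valuable bundle for the top type), and t_{b*} ≤ t_b for every nonempty bundle b ≠ b* (the grand bundle has the weakly largest sold-alone quantity). Then the minimal optimal menu is {∅, b*}. -/
namespace Paper

variable {n : ℕ}

/-- **Theorem 5 (pure bundling).** Under MD, SCD* and the boundary assumptions, if the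
grand bundle is the uniquely most valuable bundle for the top type and has the weakly
largest sold-alone quantity (weakly smallest zero of its virtual value), then the
minimal optimal menu is {∅, b*}. -/
theorem stmt9 {n : ℕ} (hn : 1 ≤ n) (t0 t1 : ℝ) (ht : t0 < t1)
    (φ : Bundle n → ℝ → ℝ)
    (hcont : ∀ b : Bundle n, ContinuousOn (φ b) (Set.Icc t0 t1))
    (hdist : Distinct φ t0 t1)
    (hmd : MD φ t0 t1)
    (hscd : SCDstar φ t0 t1)
    (hempty : ∀ t ∈ Set.Icc t0 t1, φ (∅ : Bundle n) t = 0)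
    (hneg : ∀ b : Bundle n, b ≠ ∅ → φ b t0 < 0)
    (hpos : ∀ b : Bundle n, b ≠ ∅ → 0 < φ b t1)
    (tz : Bundle n → ℝ)
    (htz_mem : ∀ b : Bundle n, b ≠ ∅ → tz b ∈ Set.Ioo t0 t1)
    (htz_zero : ∀ b : Bundle n, b ≠ ∅ → φ b (tz b) = 0)
    (htz_uniq : ∀ b : Bundle n, b ≠ ∅ → ∀ s ∈ Set.Icc t0 t1, φ b s = 0 → s = tz b)
    (htop : ∀ b : Bundle n, b ≠ Finset.univ → φ b t1 < φ Finset.univ t1)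
    (hQ : ∀ b : Bundle n, b ≠ ∅ → b ≠ Finset.univ → tz Finset.univ ≤ tz b) :
    MinimalOptimalMenu φ t0 t1 ({∅, Finset.univ} : Finset (Bundle n)) := by
  haveI : Nonempty (Fin n) := ⟨⟨0, hn⟩⟩
  have huniv : (Finset.univ : Bundle n) ≠ ∅ := Finset.univ_nonempty.ne_empty
  have ht0 : t0 ∈ Set.Icc t0 t1 := ⟨le_refl _, ht.le⟩
  have ht1 : t1 ∈ Set.Icc t0 t1 := ⟨ht.le, le_refl _⟩
  -- sign lemmas
  have hsign_pos : ∀ b : Bundle n, b ≠ ∅ → ∀ t ∈ Set.Icc t0 t1, tz b < t → 0 < φ b t := by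
    intro b hb t htmem hlt
    by_contra h
    push_neg at h
    rcases lt_or_eq_of_le h with h | h
    · have hsub : Set.Icc t t1 ⊆ Set.Icc t0 t1 := Set.Icc_subset_Icc htmem.1 le_rfl
      have hiv := intermediate_value_Icc htmem.2 ((hcont b).mono hsub)
      obtain ⟨s, hs, hs0⟩ := hiv ⟨h.le, (hpos b hb).le⟩
      have hseq := htz_uniq b hb s (hsub hs) hs0
      have : tz b < s := lt_of_lt_of_le hlt hs.1
      linarith [hseq ▸ this]
    · have := htz_uniq b hb t htmem h
      linarith [this ▸ hlt]
  have hsign_neg : ∀ b : Bundle n, b ≠ ∅ → ∀ t ∈ Set.Icc t0 t1, t < tz b → φ b t < 0 := by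
    intro b hb t htmem hlt
    by_contra h
    push_neg at h
    rcases lt_or_eq_of_le h with h | h
    · have hsub : Set.Icc t0 t ⊆ Set.Icc t0 t1 := Set.Icc_subset_Icc le_rfl htmem.2
      have hiv := intermediate_value_Icc htmem.1 ((hcont b).mono hsub)
      obtain ⟨s, hs, hs0⟩ := hiv ⟨(hneg b hb).le, h.le⟩
      have hseq := htz_uniq b hb s (hsub hs) hs0
      have : s < tz b := lt_of_le_of_lt hs.2 hlt
      linarith [hseq ▸ this]
    · have := htz_uniq b hb t htmem h.symm
      linarith [this ▸ hlt]
  have hgt : ∀ b : Bundle n, b ≠ ∅ → ∀ t ∈ Set.Icc t0 t1, 0 < φ b t → tz b < t := by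
    intro b hb t htmem hpt
    by_contra h
    push_neg at h
    rcases lt_or_eq_of_le h with h | h
    · exact absurd hpt (not_lt.mpr (hsign_neg b hb t htmem h).le)
    · exact absurd hpt (by rw [h, htz_zero b hb]; exact lt_irrefl 0)
  have htzu_mem : tz Finset.univ ∈ Set.Icc t0 t1 := (Set.Ioo_subset_Icc_self (htz_mem _ huniv))
  -- key claim: no bundle strictly beats both ∅ and univ
  have key : ∀ b : Bundle n, b ≠ ∅ → b ≠ Finset.univ → ∀ t ∈ Set.Icc t0 t1,
      0 < φ b t → φ Finset.univ t < φ b t → False := by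
    intro b hb hbU t htmem hbt hlt
    have h1 : tz b < t := hgt b hb t htmem hbt
    have h2 : tz Finset.univ ≤ tz b := hQ b hb hbU
    rcases hmd Finset.univ b with hm | hm
    · -- monotone: g(tz univ) ≤ g t < 0, so φ b (tz univ) > 0, contradiction
      have hle : φ Finset.univ (tz Finset.univ) - φ b (tz Finset.univ) ≤
          φ Finset.univ t - φ b t := hm htzu_mem htmem (le_trans h2 h1.le)
      rw [htz_zero _ huniv] at hle
      have hb0 : 0 < φ b (tz Finset.univ) := by linarith
      rcases lt_or_eq_of_le h2 with h2 | h2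
      · exact absurd hb0 (not_lt.mpr (hsign_neg b hb _ htzu_mem h2).le)
      · rw [h2, htz_zero b hb] at hb0; exact lt_irrefl 0 hb0
    · -- antitone: g t ≥ g t1 > 0, contradiction with g t < 0
      have hge : φ Finset.univ t1 - φ b t1 ≤ φ Finset.univ t - φ b t :=
        hm htmem ht1 htmem.2
      have := htop b hbU
      linarith
  constructor
  · -- optimality
    intro t htmem
    by_cases hc : 0 ≤ φ Finset.univ t
    · refine ⟨Finset.univ, by simp, ?_⟩
      intro b'
      by_cases hb' : b' = ∅
      · rw [hb', hempty t htmem]; exact hc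
      by_cases hb'U : b' = Finset.univ
      · rw [hb'U]
      by_contra hlt
      push_neg at hlt
      exact key b' hb' hb'U t htmem (lt_of_le_of_lt hc hlt) hlt
    · refine ⟨∅, by simp, ?_⟩
      intro b'
      rw [hempty t htmem]
      by_cases hb' : b' = ∅
      · rw [hb', hempty t htmem]
      by_contra hlt
      push_neg at hlt
      push_neg at hc
      by_cases hb'U : b' = Finset.univ
      · rw [hb'U] at hlt; linarith
      · have h1 : tz b' < t := hgt b' hb' t htmem hlt
        have h2 : tz Finset.univ ≤ tz b' := hQ b' hb' hb'U
        have := hsign_pos Finset.univ huniv t htmem (lt_of_le_of_lt h2 h1)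
        linarith
  · -- minimality
    intro S' hS' hopt
    obtain ⟨b, hbS, hbmax⟩ := hopt t1 ht1
    have hbU : b = Finset.univ := by
      by_contra h
      exact absurd (hbmax Finset.univ) (not_le.mpr (htop b h))
    obtain ⟨c, hcS, hcmax⟩ := hopt t0 ht0
    have hcE : c = ∅ := by
      by_contra h
      have := hcmax ∅
      rw [hempty t0 ht0] at this
      exact absurd this (not_le.mpr (hneg c h))
    have hsub : ({∅, Finset.univ} : Finset (Bundle n)) ⊆ S' :=
      Finset.insert_subset (hcE ▸ hcS) (Finset.singleton_subset_iff.mpr (hbU ▸ hbS))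
    exact hS'.not_subset hsub

end Paper
end
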